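/- arXiv:0902.4199 — 2 statements merged into one kernel-verified Lean document; each statement's English description precedes it below -/
import Mathlib

section
/- Let G and H be locally compact Hausdorff groupoids with open range and source maps and let Ω be a graph from G to H with anchor maps ρ and σ. Then the map f_Ω: ρ*(G) → H, (ω',γ,ω) ↦ ⟨ω', γω⟩_H (the unique η ∈ H with ω'η = γω), is a strict morphism of topological groupoids extending σ: Ω = ρ*(G)^(0) → H^(0), and the generalised morphisms satisfy [Ω] ∘ Morph(ρ) = Morph(f_Ω) as generalised morphisms from ρ*(G) to H; since Graph(ρ) is an equivalence, every generalised morphism from G to H is the composition of the inverse of an equivalence with (the morphism of) a strict morphism. -/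
/-! ## Topological groupoids, actions, equivalences -/

universe u v w x y z

/-- A topological groupoid structure on a space `G` of morphisms over a space `O` of objects.
The multiplication is a total function which is only meaningful on composable pairs
(pairs `(γ, γ')` with `s γ = r γ'`). -/
structure TopGroupoid (G : Type u) (O : Type v)
    [TopologicalSpace G] [TopologicalSpace O] where
  r : G → O
  s : G → O
  unit : O → G
  mul : G → G → G
  inv : G → G
  r_unit : ∀ x, r (unit x) = x
  s_unit : ∀ x, s (unit x) = x
  r_mul : ∀ γ γ', s γ = r γ' → r (mul γ γ') = r γ
  s_mul : ∀ γ γ', s γ = r γ' → s (mul γ γ') = s γ'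
  mul_assoc : ∀ γ₁ γ₂ γ₃, s γ₁ = r γ₂ → s γ₂ = r γ₃ →
    mul (mul γ₁ γ₂) γ₃ = mul γ₁ (mul γ₂ γ₃)
  unit_mul : ∀ γ, mul (unit (r γ)) γ = γ
  mul_unit : ∀ γ, mul γ (unit (s γ)) = γ
  r_inv : ∀ γ, r (inv γ) = s γ
  s_inv : ∀ γ, s (inv γ) = r γ
  mul_inv : ∀ γ, mul γ (inv γ) = unit (r γ)
  inv_mul : ∀ γ, mul (inv γ) γ = unit (s γ)
  continuous_r : Continuous r
  continuous_s : Continuous s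
  continuous_unit : Continuous unit
  continuous_inv : Continuous inv
  continuousOn_mul : ContinuousOn (fun p : G × G => mul p.1 p.2) {p | s p.1 = r p.2}

/-- A groupoid "with open range and source maps". -/
def TopGroupoid.OpenMaps {G : Type u} {O : Type v} [TopologicalSpace G] [TopologicalSpace O]
    (𝒢 : TopGroupoid G O) : Prop :=
  IsOpenMap 𝒢.r ∧ IsOpenMap 𝒢.s

/-- A "locally compact Hausdorff groupoid" is a topological groupoid whose total space (and
hence unit space) is locally compact Hausdorff; we record this as a property. -/
def TopGroupoid.IsLCH {G : Type u} {O : Type v} [TopologicalSpace G] [TopologicalSpace O]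
    (_ : TopGroupoid G O) : Prop :=
  LocallyCompactSpace G ∧ T2Space G ∧ LocallyCompactSpace O ∧ T2Space O

/-- A continuous left action of a topological groupoid on a space `Ω` with anchor map `ρ`.
Again the action map is total but only meaningful on composable pairs. -/
structure GLeftAction {G : Type u} {O : Type v} [TopologicalSpace G] [TopologicalSpace O]
    (𝒢 : TopGroupoid G O) (Ω : Type w) [TopologicalSpace Ω] where
  ρ : Ω → O
  act : G → Ω → Ω
  continuous_ρ : Continuous ρ
  ρ_act : ∀ γ ω, 𝒢.s γ = ρ ω → ρ (act γ ω) = 𝒢.r γ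
  unit_act : ∀ ω, act (𝒢.unit (ρ ω)) ω = ω
  mul_act : ∀ γ γ' ω, 𝒢.s γ = 𝒢.r γ' → 𝒢.s γ' = ρ ω →
    act (𝒢.mul γ γ') ω = act γ (act γ' ω)
  continuousOn_act : ContinuousOn (fun p : G × Ω => act p.1 p.2) {p | 𝒢.s p.1 = ρ p.2}

/-- A continuous right action of a topological groupoid on a space `Ω` with anchor map `σ`. -/
structure GRightAction {H : Type u} {P : Type v} [TopologicalSpace H] [TopologicalSpace P]
    (ℋ : TopGroupoid H P) (Ω : Type w) [TopologicalSpace Ω] where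
  σ : Ω → P
  act : Ω → H → Ω
  continuous_σ : Continuous σ
  σ_act : ∀ ω η, σ ω = ℋ.r η → σ (act ω η) = ℋ.s η
  act_unit : ∀ ω, act ω (ℋ.unit (σ ω)) = ω
  act_mul : ∀ ω η η', σ ω = ℋ.r η → ℋ.s η = ℋ.r η' →
    act ω (ℋ.mul η η') = act (act ω η) η'
  continuousOn_act : ContinuousOn (fun p : Ω × H => act p.1 p.2) {p | σ p.1 = ℋ.r p.2}

namespace GLeftAction

variable {G : Type u} {O : Type v} [TopologicalSpace G] [TopologicalSpace O]
variable {𝒢 : TopGroupoid G O} {Ω : Type w} [TopologicalSpace Ω]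

/-- Freeness of a left groupoid action. -/
def Free (a : GLeftAction 𝒢 Ω) : Prop :=
  ∀ γ ω, 𝒢.s γ = a.ρ ω → a.act γ ω = ω → γ = 𝒢.unit (a.ρ ω)

/-- Properness of a left groupoid action: the map `(γ, ω) ↦ (γ·ω, ω)` on the space of
composable pairs is a proper map. -/
def Proper (a : GLeftAction 𝒢 Ω) : Prop :=
  IsProperMap (fun p : {p : G × Ω // 𝒢.s p.1 = a.ρ p.2} =>
    ((a.act p.1.1 p.1.2, p.1.2) : Ω × Ω))

end GLeftAction

namespace GRightAction

variable {H : Type u} {P : Type v} [TopologicalSpace H] [TopologicalSpace P]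
variable {ℋ : TopGroupoid H P} {Ω : Type w} [TopologicalSpace Ω]

/-- Freeness of a right groupoid action. -/
def Free (a : GRightAction ℋ Ω) : Prop :=
  ∀ ω η, a.σ ω = ℋ.r η → a.act ω η = ω → η = ℋ.unit (a.σ ω)

/-- Properness of a right groupoid action. -/
def Proper (a : GRightAction ℋ Ω) : Prop :=
  IsProperMap (fun p : {p : Ω × H // a.σ p.1 = ℋ.r p.2} =>
    ((a.act p.1.1 p.1.2, p.1.1) : Ω × Ω))

end GRightAction

/-- A `𝒢`-`ℋ`-bimodule: commuting continuous left `𝒢`- and right `ℋ`-actions on `Ω`. -/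
structure GBimodule {G : Type u} {O : Type v} {H : Type w} {P : Type x}
    [TopologicalSpace G] [TopologicalSpace O] [TopologicalSpace H] [TopologicalSpace P]
    (𝒢 : TopGroupoid G O) (ℋ : TopGroupoid H P) (Ω : Type y) [TopologicalSpace Ω] where
  left : GLeftAction 𝒢 Ω
  right : GRightAction ℋ Ω
  σ_actl : ∀ γ ω, 𝒢.s γ = left.ρ ω → right.σ (left.act γ ω) = right.σ ω
  ρ_actr : ∀ ω η, right.σ ω = ℋ.r η → left.ρ (right.act ω η) = left.ρ ω
  commute : ∀ γ ω η, 𝒢.s γ = left.ρ ω → right.σ ω = ℋ.r η →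
    left.act γ (right.act ω η) = right.act (left.act γ ω) η

/-- A graph ("generalised morphism datum") from `𝒢` to `ℋ`: a bimodule whose left anchor map
`ρ` is a principal fibration with structure groupoid `ℋ`. -/
structure IsGraph {G : Type u} {O : Type v} {H : Type w} {P : Type x}
    [TopologicalSpace G] [TopologicalSpace O] [TopologicalSpace H] [TopologicalSpace P]
    {𝒢 : TopGroupoid G O} {ℋ : TopGroupoid H P} {Ω : Type y} [TopologicalSpace Ω]
    (M : GBimodule 𝒢 ℋ Ω) : Prop where
  free_right : M.right.Free
  proper_right : M.right.Proper
  ρ_open : IsOpenMap M.left.ρ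
  ρ_surj : Function.Surjective M.left.ρ
  fibre_trans : ∀ ω ω', M.left.ρ ω = M.left.ρ ω' →
    ∃ η, M.right.σ ω = ℋ.r η ∧ M.right.act ω η = ω'

/-- A `𝒢`-`ℋ`-equivalence bimodule. -/
structure IsEquivalence {G : Type u} {O : Type v} {H : Type w} {P : Type x}
    [TopologicalSpace G] [TopologicalSpace O] [TopologicalSpace H] [TopologicalSpace P]
    {𝒢 : TopGroupoid G O} {ℋ : TopGroupoid H P} {Ω : Type y} [TopologicalSpace Ω]
    (M : GBimodule 𝒢 ℋ Ω) : Prop where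
  free_left : M.left.Free
  proper_left : M.left.Proper
  free_right : M.right.Free
  proper_right : M.right.Proper
  ρ_open : IsOpenMap M.left.ρ
  ρ_surj : Function.Surjective M.left.ρ
  /-- the fibres of `ρ` are exactly the `ℋ`-orbits, i.e. `ρ` induces a homeomorphism
  `Ω/ℋ ≅ 𝒢⁽⁰⁾` (openness + surjectivity + this condition). -/
  ρ_fibres : ∀ ω ω', M.left.ρ ω = M.left.ρ ω' ↔
    ∃ η, M.right.σ ω = ℋ.r η ∧ M.right.act ω η = ω'
  σ_open : IsOpenMap M.right.σ
  σ_surj : Function.Surjective M.right.σ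
  /-- the fibres of `σ` are exactly the `𝒢`-orbits, i.e. `σ` induces a homeomorphism
  `𝒢\Ω ≅ ℋ⁽⁰⁾`. -/
  σ_fibres : ∀ ω ω', M.right.σ ω = M.right.σ ω' ↔
    ∃ γ, 𝒢.s γ = M.left.ρ ω ∧ M.left.act γ ω = ω'

/-- A strict morphism of topological groupoids (a continuous functor). -/
structure StrictMorphism {G : Type u} {O : Type v} {H : Type w} {P : Type x}
    [TopologicalSpace G] [TopologicalSpace O] [TopologicalSpace H] [TopologicalSpace P]
    (𝒢 : TopGroupoid G O) (ℋ : TopGroupoid H P) where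
  toFun : G → H
  obj : O → P
  continuous_toFun : Continuous toFun
  continuous_obj : Continuous obj
  map_unit : ∀ x, toFun (𝒢.unit x) = ℋ.unit (obj x)
  map_r : ∀ γ, ℋ.r (toFun γ) = obj (𝒢.r γ)
  map_s : ∀ γ, ℋ.s (toFun γ) = obj (𝒢.s γ)
  map_mul : ∀ γ γ', 𝒢.s γ = 𝒢.r γ' → toFun (𝒢.mul γ γ') = ℋ.mul (toFun γ) (toFun γ')

/-- The carrier of the pullback groupoid `p*(𝒢)` along `p : Y → 𝒢⁽⁰⁾`. -/
def PullbackCarrier {G : Type u} {O : Type v} [TopologicalSpace G] [TopologicalSpace O]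
    (𝒢 : TopGroupoid G O) {Y : Type w} [TopologicalSpace Y] (p : Y → O) : Type (max u w) :=
  {t : Y × G × Y // p t.1 = 𝒢.r t.2.1 ∧ 𝒢.s t.2.1 = p t.2.2}

instance {G : Type u} {O : Type v} [TopologicalSpace G] [TopologicalSpace O]
    (𝒢 : TopGroupoid G O) {Y : Type w} [TopologicalSpace Y] (p : Y → O) :
    TopologicalSpace (PullbackCarrier 𝒢 p) :=
  instTopologicalSpaceSubtype

/-- A topological groupoid structure on `PullbackCarrier 𝒢 p` realises the pullback groupoid
`p*(𝒢)` if its structure maps are the canonical ones. -/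
structure IsPullbackGroupoid {G : Type u} {O : Type v} [TopologicalSpace G] [TopologicalSpace O]
    (𝒢 : TopGroupoid G O) {Y : Type w} [TopologicalSpace Y] (p : Y → O)
    (PB : TopGroupoid (PullbackCarrier 𝒢 p) Y) : Prop where
  r_eq : ∀ t : PullbackCarrier 𝒢 p, PB.r t = t.1.1
  s_eq : ∀ t : PullbackCarrier 𝒢 p, PB.s t = t.1.2.2
  unit_eq : ∀ y : Y, (PB.unit y).1 = (y, 𝒢.unit (p y), y)
  mul_eq : ∀ t t' : PullbackCarrier 𝒢 p, t.1.2.2 = t'.1.1 →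
    (PB.mul t t').1 = (t.1.1, 𝒢.mul t.1.2.1 t'.1.2.1, t'.1.2.2)
  inv_eq : ∀ t : PullbackCarrier 𝒢 p, (PB.inv t).1 = (t.1.2.2, 𝒢.inv t.1.2.1, t.1.1)

/-! Since `ρ` is a principal `ℋ`-fibration, `⟨ω, ω'⟩_ℋ` is well defined, and it is continuous
because the right `ℋ`-action is free and proper. It satisfies `⟨ω₁, ω₂⟩⟨ω₂, ω₃⟩ = ⟨ω₁, ω₃⟩`,
`⟨γω, γω'⟩ = ⟨ω, ω'⟩` and `⟨ω, ω'η⟩ = ⟨ω, ω'⟩η`. The first two make `f_Ω` a functor and, with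
the third, make `[((ω'', γ), ω)] ↦ (ω'', ⟨ω'', γω⟩_ℋ)` an equivariant homeomorphism
`Graph(ρ) ×_𝒢 Ω → Graph(f_Ω)` with inverse `(ω, η) ↦ [((ω, 1), ωη)]`. `Graph(ρ)` is an
equivalence because `ρ` is an open surjection; every properness condition holds because the
relevant map is a homeomorphism onto a closed set, with an explicit inverse. -/

open Topology

lemma isProperMap_of_inverse_on_isClosed {X Y : Type*} [TopologicalSpace X] [TopologicalSpace Y]
    {f : X → Y} (hf : Continuous f) {C : Set Y} (hC : IsClosed C) (hmem : ∀ x, f x ∈ C)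
    (g : C → X) (hg : Continuous g) (hgf : ∀ x, g ⟨f x, hmem x⟩ = x)
    (hfg : ∀ c, f (g c) = c) : IsProperMap f :=
  let e : X ≃ₜ C :=
    { toFun := Set.codRestrict f C hmem
      invFun := g
      left_inv := hgf
      right_inv := fun c => Subtype.ext (hfg c)
      continuous_toFun := hf.codRestrict hmem
      continuous_invFun := hg }
  (hC.isClosedEmbedding_subtypeVal.comp e.isClosedEmbedding).isProperMap

section FibreProduct

variable {A B C : Type*} [TopologicalSpace A] [TopologicalSpace B] [TopologicalSpace C]
  {p : A → C} {q : B → C}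

lemma isOpenMap_fibreProduct_fst (hp : Continuous p) (hq : IsOpenMap q) :
    IsOpenMap (fun t : {x : A × B // p x.1 = q x.2} => t.1.1) := by
  intro U hU
  obtain ⟨T, hT, rfl⟩ := isOpen_induced_iff.mp hU
  rw [isOpen_iff_forall_mem_open]
  rintro a ⟨t, ht, rfl⟩
  obtain ⟨V, W, hV, hW, haV, hbW, hVW⟩ := isOpen_prod_iff.mp hT t.1.1 t.1.2 ht
  refine ⟨V ∩ p ⁻¹' (q '' W), ?_, hV.inter ((hq W hW).preimage hp), haV, t.1.2, hbW, t.2.symm⟩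
  rintro a' ⟨haV', b, hbW', hqb⟩
  exact ⟨⟨(a', b), hqb.symm⟩, hVW ⟨haV', hbW'⟩, rfl⟩

lemma isOpenMap_fibreProduct_snd (hp : IsOpenMap p) (hq : Continuous q) :
    IsOpenMap (fun t : {x : A × B // p x.1 = q x.2} => t.1.2) := by
  intro U hU
  obtain ⟨T, hT, rfl⟩ := isOpen_induced_iff.mp hU
  rw [isOpen_iff_forall_mem_open]
  rintro b ⟨t, ht, rfl⟩
  obtain ⟨V, W, hV, hW, haV, hbW, hVW⟩ := isOpen_prod_iff.mp hT t.1.1 t.1.2 ht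
  refine ⟨W ∩ q ⁻¹' (p '' V), ?_, hW.inter ((hp V hV).preimage hq), hbW, t.1.1, haV, t.2⟩
  rintro b' ⟨hbW', a, haV', hpa⟩
  exact ⟨⟨(a, b'), hpa⟩, hVW ⟨haV', hbW'⟩, rfl⟩

end FibreProduct

namespace TopGroupoid

variable {G O : Type*} [TopologicalSpace G] [TopologicalSpace O] (𝒢 : TopGroupoid G O)

lemma mul_inv_cancel_right {γ δ : G} (h : 𝒢.s γ = 𝒢.r δ) :
    𝒢.mul (𝒢.mul γ δ) (𝒢.inv δ) = γ := by
  rw [𝒢.mul_assoc γ δ (𝒢.inv δ) h (𝒢.r_inv δ).symm, 𝒢.mul_inv δ, ← h, 𝒢.mul_unit]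

lemma inv_mul_cancel_left {γ δ : G} (h : 𝒢.s γ = 𝒢.r δ) :
    𝒢.mul (𝒢.inv γ) (𝒢.mul γ δ) = δ := by
  rw [← 𝒢.mul_assoc (𝒢.inv γ) γ δ (𝒢.s_inv γ) h, 𝒢.inv_mul γ, h, 𝒢.unit_mul]

lemma mul_inv_mul_cancel {γ δ : G} (h : 𝒢.s γ = 𝒢.s δ) :
    𝒢.mul (𝒢.mul γ (𝒢.inv δ)) δ = γ := by
  rw [𝒢.mul_assoc _ _ _ (by rw [𝒢.r_inv, h]) (𝒢.s_inv δ), 𝒢.inv_mul, ← h, 𝒢.mul_unit]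

lemma mul_inv_mul_cancel_left {γ δ : G} (h : 𝒢.r γ = 𝒢.r δ) :
    𝒢.mul γ (𝒢.mul (𝒢.inv γ) δ) = δ := by
  rw [← 𝒢.mul_assoc _ _ _ (𝒢.r_inv γ).symm (by rw [𝒢.s_inv, h]), 𝒢.mul_inv, h, 𝒢.unit_mul]

end TopGroupoid

section Actions

variable {G O H P Ω : Type*} [TopologicalSpace G] [TopologicalSpace O] [TopologicalSpace H]
  [TopologicalSpace P] [TopologicalSpace Ω] {𝒢 : TopGroupoid G O} {ℋ : TopGroupoid H P}

lemma GLeftAction.eq_ρ_act (a : GLeftAction 𝒢 Ω) {x : O} {γ : G} {ω : Ω} (hx : x = 𝒢.r γ)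
    (hγ : 𝒢.s γ = a.ρ ω) : x = a.ρ (a.act γ ω) :=
  hx.trans (a.ρ_act γ ω hγ).symm

lemma GRightAction.act_injective (a : GRightAction ℋ Ω) (hfree : a.Free) {ω : Ω} {η η' : H}
    (h : a.σ ω = ℋ.r η) (h' : a.σ ω = ℋ.r η') (heq : a.act ω η = a.act ω η') : η = η' := by
  have hs : ℋ.s η = ℋ.s η' := by rw [← a.σ_act ω η h, ← a.σ_act ω η' h', heq]
  have hc : ℋ.s η' = ℋ.r (ℋ.inv η) := by rw [ℋ.r_inv, hs]
  have hfix : a.act ω (ℋ.mul η' (ℋ.inv η)) = ω := by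
    rw [a.act_mul ω η' (ℋ.inv η) h' hc, ← heq, ← a.act_mul ω η (ℋ.inv η) h (ℋ.r_inv η).symm,
      ℋ.mul_inv, ← h, a.act_unit]
  have hunit := hfree ω _ (by rw [ℋ.r_mul _ _ hc, ← h']) hfix
  rw [← ℋ.mul_inv_mul_cancel hs.symm, hunit, h, ℋ.unit_mul]

end Actions

namespace IsGraph

variable {G O H P Ω : Type*} [TopologicalSpace G] [TopologicalSpace O] [TopologicalSpace H]
  [TopologicalSpace P] [TopologicalSpace Ω] {𝒢 : TopGroupoid G O} {ℋ : TopGroupoid H P}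
  {M : GBimodule 𝒢 ℋ Ω}

lemma ρ_eq_iff (hM : IsGraph M) (ω ω' : Ω) :
    M.left.ρ ω = M.left.ρ ω' ↔ ∃ η, M.right.σ ω = ℋ.r η ∧ M.right.act ω η = ω' :=
  ⟨hM.fibre_trans ω ω', fun ⟨η, hη, hact⟩ => hact ▸ (M.ρ_actr ω η hη).symm⟩

variable (hM : IsGraph M) {ω ω' : Ω}

open Classical in
/-- The paper's `⟨ω, ω'⟩_ℋ`, i.e. the `η` with `ω·η = ω'`; the junk value `ℋ.unit (σ ω)` is
taken off the fibre product `ρ ω = ρ ω'`. -/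
noncomputable def pairing (ω ω' : Ω) : H :=
  if h : M.left.ρ ω = M.left.ρ ω' then (hM.fibre_trans ω ω' h).choose
  else ℋ.unit (M.right.σ ω)

lemma σ_eq_r_pairing (h : M.left.ρ ω = M.left.ρ ω') :
    M.right.σ ω = ℋ.r (hM.pairing ω ω') := by
  rw [pairing, dif_pos h]
  exact (hM.fibre_trans ω ω' h).choose_spec.1

lemma act_pairing (h : M.left.ρ ω = M.left.ρ ω') :
    M.right.act ω (hM.pairing ω ω') = ω' := by
  rw [pairing, dif_pos h]
  exact (hM.fibre_trans ω ω' h).choose_spec.2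

lemma pairing_eq {η : H} (hη : M.right.σ ω = ℋ.r η) (hact : M.right.act ω η = ω') :
    hM.pairing ω ω' = η := by
  have h : M.left.ρ ω = M.left.ρ ω' := by rw [← hact, M.ρ_actr ω η hη]
  exact M.right.act_injective hM.free_right (hM.σ_eq_r_pairing h) hη
    ((hM.act_pairing h).trans hact.symm)

lemma s_pairing (h : M.left.ρ ω = M.left.ρ ω') : ℋ.s (hM.pairing ω ω') = M.right.σ ω' := by
  rw [← M.right.σ_act ω _ (hM.σ_eq_r_pairing h), hM.act_pairing h]

lemma pairing_self (ω : Ω) : hM.pairing ω ω = ℋ.unit (M.right.σ ω) :=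
  hM.pairing_eq (ℋ.r_unit _).symm (M.right.act_unit ω)

lemma pairing_mul_pairing {ω₁ ω₂ ω₃ : Ω} (h₁₂ : M.left.ρ ω₁ = M.left.ρ ω₂)
    (h₂₃ : M.left.ρ ω₂ = M.left.ρ ω₃) :
    ℋ.mul (hM.pairing ω₁ ω₂) (hM.pairing ω₂ ω₃) = hM.pairing ω₁ ω₃ := by
  have hc : ℋ.s (hM.pairing ω₁ ω₂) = ℋ.r (hM.pairing ω₂ ω₃) :=
    (hM.s_pairing h₁₂).trans (hM.σ_eq_r_pairing h₂₃)
  refine (hM.pairing_eq ?_ ?_).symm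
  · rw [ℋ.r_mul _ _ hc]
    exact hM.σ_eq_r_pairing h₁₂
  · rw [M.right.act_mul _ _ _ (hM.σ_eq_r_pairing h₁₂) hc, hM.act_pairing h₁₂, hM.act_pairing h₂₃]

lemma pairing_left_act {γ : G} (hγ : 𝒢.s γ = M.left.ρ ω) (h : M.left.ρ ω = M.left.ρ ω') :
    hM.pairing (M.left.act γ ω) (M.left.act γ ω') = hM.pairing ω ω' := by
  refine hM.pairing_eq ?_ ?_
  · rw [M.σ_actl γ ω hγ]
    exact hM.σ_eq_r_pairing h
  · rw [← M.commute γ ω _ hγ (hM.σ_eq_r_pairing h), hM.act_pairing h]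

lemma pairing_act_mul_pairing {ω₁ ω₂ ω₃ : Ω} {γ : G} (h₁ : M.left.ρ ω₁ = 𝒢.r γ)
    (hγ : 𝒢.s γ = M.left.ρ ω₂) (h₂₃ : M.left.ρ ω₂ = M.left.ρ ω₃) :
    ℋ.mul (hM.pairing ω₁ (M.left.act γ ω₂)) (hM.pairing ω₂ ω₃) =
      hM.pairing ω₁ (M.left.act γ ω₃) := by
  have h₂₃' : M.left.ρ (M.left.act γ ω₂) = M.left.ρ (M.left.act γ ω₃) := by
    rw [M.left.ρ_act _ _ hγ, M.left.ρ_act _ _ (hγ.trans h₂₃)]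
  rw [← hM.pairing_left_act hγ h₂₃, hM.pairing_mul_pairing (M.left.eq_ρ_act h₁ hγ) h₂₃']

lemma pairing_right_act {η : H} (h : M.left.ρ ω = M.left.ρ ω') (hη : M.right.σ ω' = ℋ.r η) :
    hM.pairing ω (M.right.act ω' η) = ℋ.mul (hM.pairing ω ω') η := by
  have hc : ℋ.s (hM.pairing ω ω') = ℋ.r η := (hM.s_pairing h).trans hη
  refine hM.pairing_eq ?_ ?_
  · rw [ℋ.r_mul _ _ hc]
    exact hM.σ_eq_r_pairing h
  · rw [M.right.act_mul _ _ _ (hM.σ_eq_r_pairing h) hc, hM.act_pairing h]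

/-- `d ↦ (d.1, ⟨d.1, d.2⟩)` inverts the closed embedding `(ω, η) ↦ (ω·η, ω)` (up to a swap),
which is closed because the right action is proper, and injective because it is free. -/
lemma continuous_pairing :
    Continuous fun d : {p : Ω × Ω // M.left.ρ p.1 = M.left.ρ p.2} => hM.pairing d.1.1 d.1.2 := by
  let F := fun p : {p : Ω × H // M.right.σ p.1 = ℋ.r p.2} =>
    ((M.right.act p.1.1 p.1.2, p.1.1) : Ω × Ω)
  have hinj : Function.Injective F := by
    rintro ⟨⟨ω, η⟩, hη⟩ ⟨⟨ω', η'⟩, hη'⟩ he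
    obtain ⟨hact, rfl : ω = ω'⟩ := Prod.ext_iff.mp he
    exact Subtype.ext (Prod.ext rfl (M.right.act_injective hM.free_right hη hη' hact))
  have hF : IsClosedEmbedding F := .of_continuous_injective_isClosedMap
    hM.proper_right.continuous hinj hM.proper_right.isClosedMap
  let g := fun d : {p : Ω × Ω // M.left.ρ p.1 = M.left.ρ p.2} =>
    (⟨(d.1.1, hM.pairing d.1.1 d.1.2), hM.σ_eq_r_pairing d.2⟩ :
      {p : Ω × H // M.right.σ p.1 = ℋ.r p.2})
  have hg : Continuous g := by
    rw [hF.continuous_iff]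
    have hFg : F ∘ g = fun d => d.1.swap := funext fun d => Prod.ext (hM.act_pairing d.2) rfl
    rw [hFg]
    fun_prop
  exact continuous_snd.comp (continuous_subtype_val.comp hg)

end IsGraph

namespace StrictMorphism

variable {K Y H P : Type*} [TopologicalSpace K] [TopologicalSpace Y] [TopologicalSpace H]
  [TopologicalSpace P] {𝒦 : TopGroupoid K Y} {ℋ : TopGroupoid H P} (F : StrictMorphism 𝒦 ℋ)

lemma s_map_eq_r {t : K} {q : {q : Y × H // F.obj q.1 = ℋ.r q.2}} (h : 𝒦.s t = q.1.1) :
    ℋ.s (F.toFun t) = ℋ.r q.1.2 := by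
  rw [F.map_s, h, q.2]

open Classical in
noncomputable def graphLeftAction : GLeftAction 𝒦 {q : Y × H // F.obj q.1 = ℋ.r q.2} where
  ρ q := q.1.1
  act t q := if h : 𝒦.s t = q.1.1 then
      ⟨(𝒦.r t, ℋ.mul (F.toFun t) q.1.2), by rw [ℋ.r_mul _ _ (F.s_map_eq_r h), F.map_r]⟩
    else q
  continuous_ρ := by fun_prop
  ρ_act t q h := by rw [dif_pos h]
  unit_act q := by
    rw [dif_pos (𝒦.s_unit _)]
    refine Subtype.ext (Prod.ext (𝒦.r_unit _) ?_)
    dsimp only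
    rw [F.map_unit, q.2, ℋ.unit_mul]
  mul_act t t' q h₁ h₂ := by
    have hc : ℋ.s (F.toFun t) = ℋ.r (F.toFun t') := by rw [F.map_s, F.map_r, h₁]
    rw [dif_pos ((𝒦.s_mul _ _ h₁).trans h₂), dif_pos h₂, dif_pos h₁]
    refine Subtype.ext (Prod.ext (𝒦.r_mul _ _ h₁) ?_)
    dsimp only
    rw [F.map_mul _ _ h₁, ℋ.mul_assoc _ _ _ hc (F.s_map_eq_r h₂)]
  continuousOn_act := by
    refine IsInducing.subtypeVal.continuousOn_iff.mpr ?_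
    have hpair : Continuous fun p : K × {q : Y × H // F.obj q.1 = ℋ.r q.2} =>
        (F.toFun p.1, p.2.1.2) := (F.continuous_toFun.comp continuous_fst).prodMk (by fun_prop)
    have hmul : ContinuousOn (fun p : K × {q : Y × H // F.obj q.1 = ℋ.r q.2} =>
        ℋ.mul (F.toFun p.1) p.2.1.2) {p | 𝒦.s p.1 = p.2.1.1} :=
      ℋ.continuousOn_mul.comp hpair.continuousOn fun p hp => F.s_map_eq_r hp
    refine ((𝒦.continuous_r.comp continuous_fst).continuousOn.prodMk hmul).congr fun p hp => ?_
    simp only [Function.comp_apply, dif_pos (show 𝒦.s p.1 = p.2.1.1 from hp)]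

open Classical in
noncomputable def graphRightAction : GRightAction ℋ {q : Y × H // F.obj q.1 = ℋ.r q.2} where
  σ q := ℋ.s q.1.2
  act q η := if h : ℋ.s q.1.2 = ℋ.r η then
      ⟨(q.1.1, ℋ.mul q.1.2 η), q.2.trans (ℋ.r_mul _ _ h).symm⟩
    else q
  continuous_σ := ℋ.continuous_s.comp (by fun_prop)
  σ_act q η h := by
    rw [dif_pos h]
    exact ℋ.s_mul _ _ h
  act_unit q := by
    rw [dif_pos (ℋ.r_unit _).symm]
    exact Subtype.ext (Prod.ext rfl (ℋ.mul_unit _))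
  act_mul q η η' h₁ h₂ := by
    rw [dif_pos ((ℋ.r_mul _ _ h₂).symm ▸ h₁), dif_pos h₁,
      dif_pos (show ℋ.s (ℋ.mul q.1.2 η) = ℋ.r η' from (ℋ.s_mul _ _ h₁).trans h₂)]
    exact Subtype.ext (Prod.ext rfl (ℋ.mul_assoc _ _ _ h₁ h₂).symm)
  continuousOn_act := by
    refine IsInducing.subtypeVal.continuousOn_iff.mpr ?_
    have hmul : ContinuousOn (fun p : {q : Y × H // F.obj q.1 = ℋ.r q.2} × H =>
        ℋ.mul p.1.1.2 p.2) {p | ℋ.s p.1.1.2 = ℋ.r p.2} :=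
      ℋ.continuousOn_mul.comp (Continuous.continuousOn (by fun_prop :
        Continuous fun p : {q : Y × H // F.obj q.1 = ℋ.r q.2} × H => (p.1.1.2, p.2)))
        fun p hp => hp
    refine ((continuous_fst.comp (continuous_subtype_val.comp continuous_fst)).continuousOn.prodMk
      hmul).congr fun p hp => ?_
    simp only [Function.comp_apply, dif_pos (show ℋ.s p.1.1.2 = ℋ.r p.2 from hp)]

lemma graphLeftAction_act {t : K} {q : {q : Y × H // F.obj q.1 = ℋ.r q.2}} (h : 𝒦.s t = q.1.1) :
    (F.graphLeftAction.act t q).1 = (𝒦.r t, ℋ.mul (F.toFun t) q.1.2) :=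
  congrArg Subtype.val (dif_pos h)

lemma graphRightAction_act {q : {q : Y × H // F.obj q.1 = ℋ.r q.2}} {η : H}
    (h : ℋ.s q.1.2 = ℋ.r η) : (F.graphRightAction.act q η).1 = (q.1.1, ℋ.mul q.1.2 η) :=
  congrArg Subtype.val (dif_pos h)

/-- `Graph(F) = Y ×_P H`, the bimodule representing `Morph(F)`. -/
noncomputable def graph : GBimodule 𝒦 ℋ {q : Y × H // F.obj q.1 = ℋ.r q.2} where
  left := F.graphLeftAction
  right := F.graphRightAction
  σ_actl t q h := by
    show ℋ.s (F.graphLeftAction.act t q).1.2 = ℋ.s q.1.2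
    rw [F.graphLeftAction_act h]
    exact ℋ.s_mul _ _ (F.s_map_eq_r h)
  ρ_actr q η h := by
    show (F.graphRightAction.act q η).1.1 = q.1.1
    rw [F.graphRightAction_act h]
  commute t q η h₁ h₂ := by
    have h₁' : 𝒦.s t = (F.graphRightAction.act q η).1.1 := by
      rw [F.graphRightAction_act h₂]; exact h₁
    have h₂' : ℋ.s (F.graphLeftAction.act t q).1.2 = ℋ.r η := by
      rw [F.graphLeftAction_act h₁, ℋ.s_mul _ _ (F.s_map_eq_r h₁)]; exact h₂
    refine Subtype.ext ?_
    show (F.graphLeftAction.act t (F.graphRightAction.act q η)).1 =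
      (F.graphRightAction.act (F.graphLeftAction.act t q) η).1
    rw [F.graphLeftAction_act h₁', F.graphRightAction_act h₂', F.graphRightAction_act h₂,
      F.graphLeftAction_act h₁, ℋ.mul_assoc _ _ _ (F.s_map_eq_r h₁) h₂]

lemma graph_left_act {t : K} {q : {q : Y × H // F.obj q.1 = ℋ.r q.2}} (h : 𝒦.s t = q.1.1) :
    (F.graph.left.act t q).1 = (𝒦.r t, ℋ.mul (F.toFun t) q.1.2) :=
  F.graphLeftAction_act h

lemma graph_right_act {q : {q : Y × H // F.obj q.1 = ℋ.r q.2}} {η : H}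
    (h : ℋ.s q.1.2 = ℋ.r η) : (F.graph.right.act q η).1 = (q.1.1, ℋ.mul q.1.2 η) :=
  F.graphRightAction_act h

lemma graph_right_free : F.graph.right.Free := by
  intro q η h hfix
  have hmul : ℋ.mul q.1.2 η = q.1.2 :=
    congrArg Prod.snd ((F.graph_right_act h).symm.trans (congrArg Subtype.val hfix))
  have hη := ℋ.inv_mul_cancel_left h
  rw [hmul, ℋ.inv_mul] at hη
  exact hη.symm

/-- Inverse of `(q, η) ↦ (q·η, q)` on its closed image: `(q', q) ↦ (q, q.2⁻¹ q'.2)`. -/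
lemma graph_right_proper [T2Space Y] : F.graph.right.Proper := by
  let C : Set ({q : Y × H // F.obj q.1 = ℋ.r q.2} × {q : Y × H // F.obj q.1 = ℋ.r q.2}) :=
    {z | z.1.1.1 = z.2.1.1}
  have hr (z : C) : ℋ.r z.1.2.1.2 = ℋ.r z.1.1.1.2 := by rw [← z.1.2.2, ← z.1.1.2, z.2]
  have hc (z : C) : ℋ.s z.1.2.1.2 = ℋ.r (ℋ.mul (ℋ.inv z.1.2.1.2) z.1.1.1.2) := by
    rw [ℋ.r_mul _ _ (by rw [ℋ.s_inv, hr z]), ℋ.r_inv]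
  refine isProperMap_of_inverse_on_isClosed (C := C)
    ((F.graph.right.continuousOn_act.comp_continuous continuous_subtype_val fun p => p.2).prodMk
      (by fun_prop)) (isClosed_eq (by fun_prop) (by fun_prop))
    (fun p => F.graph.ρ_actr p.1.1 p.1.2 p.2)
    (fun z => ⟨(z.1.2, ℋ.mul (ℋ.inv z.1.2.1.2) z.1.1.1.2), hc z⟩) ?_ ?_ ?_
  · refine Continuous.subtype_mk (.prodMk (by fun_prop) ?_) _
    exact ℋ.continuousOn_mul.comp_continuous
      ((ℋ.continuous_inv.comp (by fun_prop)).prodMk (by fun_prop) :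
        Continuous fun z : C => (ℋ.inv z.1.2.1.2, z.1.1.1.2))
      fun z => (ℋ.s_inv _).trans (hr z)
  · rintro ⟨⟨q, η⟩, h⟩
    refine Subtype.ext (Prod.ext rfl ?_)
    show ℋ.mul (ℋ.inv q.1.2) (F.graph.right.act q η).1.2 = η
    rw [F.graph_right_act h, ℋ.inv_mul_cancel_left h]
  · intro z
    refine Prod.ext (Subtype.ext ?_) rfl
    rw [F.graph_right_act (hc z), ℋ.mul_inv_mul_cancel_left (hr z)]
    exact Prod.ext z.2.symm rfl

lemma isGraph_graph [T2Space Y] (hr : IsOpenMap ℋ.r) : IsGraph F.graph where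
  free_right := F.graph_right_free
  proper_right := F.graph_right_proper
  ρ_open := isOpenMap_fibreProduct_fst F.continuous_obj hr
  ρ_surj y := ⟨⟨(y, ℋ.unit (F.obj y)), (ℋ.r_unit _).symm⟩, rfl⟩
  fibre_trans q q' h := by
    have hr : ℋ.r q.1.2 = ℋ.r q'.1.2 := by rw [← q.2, ← q'.2]; exact congrArg F.obj h
    have hc : ℋ.s q.1.2 = ℋ.r (ℋ.mul (ℋ.inv q.1.2) q'.1.2) := by
      rw [ℋ.r_mul _ _ (by rw [ℋ.s_inv, hr]), ℋ.r_inv]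
    refine ⟨_, hc, Subtype.ext ?_⟩
    rw [F.graph_right_act hc, ℋ.mul_inv_mul_cancel_left hr]
    exact Prod.ext h rfl

end StrictMorphism

namespace IsGraph

variable {G O H P Ω : Type*} [TopologicalSpace G] [TopologicalSpace O] [TopologicalSpace H]
  [TopologicalSpace P] [TopologicalSpace Ω] {𝒢 : TopGroupoid G O} {ℋ : TopGroupoid H P}
  {M : GBimodule 𝒢 ℋ Ω} (hM : IsGraph M)
  (PB : TopGroupoid (PullbackCarrier 𝒢 M.left.ρ) Ω) (hPB : IsPullbackGroupoid 𝒢 M.left.ρ PB)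

/-- `f_Ω (ω', γ, ω) = ⟨ω', γ·ω⟩_ℋ`. -/
noncomputable def pullbackMorphism : StrictMorphism PB ℋ where
  toFun t := hM.pairing t.1.1 (M.left.act t.1.2.1 t.1.2.2)
  obj := M.right.σ
  continuous_toFun := by
    have hact : Continuous fun t : PullbackCarrier 𝒢 M.left.ρ => M.left.act t.1.2.1 t.1.2.2 :=
      M.left.continuousOn_act.comp_continuous (by fun_prop) fun t => t.2.2
    exact hM.continuous_pairing.comp
      (Continuous.subtype_mk ((by fun_prop : Continuous fun t : PullbackCarrier 𝒢 M.left.ρ =>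
        t.1.1).prodMk hact) fun t => M.left.eq_ρ_act t.2.1 t.2.2)
  continuous_obj := M.right.continuous_σ
  map_unit y := by
    rw [hPB.unit_eq, M.left.unit_act, hM.pairing_self]
  map_r t := by
    rw [hPB.r_eq]
    exact (hM.σ_eq_r_pairing (M.left.eq_ρ_act t.2.1 t.2.2)).symm
  map_s t := by
    rw [hPB.s_eq, hM.s_pairing (M.left.eq_ρ_act t.2.1 t.2.2), M.σ_actl _ _ t.2.2]
  map_mul t t' h := by
    have hc : t.1.2.2 = t'.1.1 := by rw [← hPB.s_eq, ← hPB.r_eq, h]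
    rw [hPB.mul_eq t t' hc]
    dsimp only
    rw [M.left.mul_act _ _ _ (t.2.2.trans (hc ▸ t'.2.1)) t'.2.2, ← hc]
    exact (hM.pairing_act_mul_pairing t.2.1 t.2.2 (hc ▸ M.left.eq_ρ_act t'.2.1 t'.2.2)).symm

end IsGraph

namespace IsPullbackGroupoid

variable {G O Y : Type*} [TopologicalSpace G] [TopologicalSpace O] [TopologicalSpace Y]
  {𝒢 : TopGroupoid G O} {p : Y → O} {PB : TopGroupoid (PullbackCarrier 𝒢 p) Y}

lemma graph_left_act (hPB : IsPullbackGroupoid 𝒢 p PB) {H P : Type*} [TopologicalSpace H]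
    [TopologicalSpace P] {ℋ : TopGroupoid H P} (F : StrictMorphism PB ℋ) {t : PullbackCarrier 𝒢 p}
    {q : {q : Y × H // F.obj q.1 = ℋ.r q.2}} (h : t.1.2.2 = q.1.1) :
    (F.graph.left.act t q).1 = (t.1.1, ℋ.mul (F.toFun t) q.1.2) := by
  rw [F.graph_left_act ((hPB.s_eq t).trans h), hPB.r_eq]

/-- The canonical morphism `p*(𝒢) → 𝒢`; its graph is the paper's `Graph(p)`. -/
def proj (hPB : IsPullbackGroupoid 𝒢 p PB) (hp : Continuous p) : StrictMorphism PB 𝒢 where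
  toFun t := t.1.2.1
  obj := p
  continuous_toFun := by fun_prop
  continuous_obj := hp
  map_unit y := by rw [hPB.unit_eq]
  map_r t := by rw [hPB.r_eq]; exact t.2.1.symm
  map_s t := by rw [hPB.s_eq]; exact t.2.2
  map_mul t t' h := by rw [hPB.mul_eq t t' (by rw [← hPB.s_eq, ← hPB.r_eq, h])]

def transporter (q q' : {q : Y × G // p q.1 = 𝒢.r q.2}) (h : 𝒢.s q.1.2 = 𝒢.s q'.1.2) :
    PullbackCarrier 𝒢 p :=
  ⟨(q'.1.1, 𝒢.mul q'.1.2 (𝒢.inv q.1.2), q.1.1),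
    by rw [𝒢.r_mul _ _ (by rw [𝒢.r_inv, h]), q'.2],
    by rw [𝒢.s_mul _ _ (by rw [𝒢.r_inv, h]), 𝒢.s_inv, q.2]⟩

variable (hPB : IsPullbackGroupoid 𝒢 p PB) (hp : Continuous p)

lemma proj_graph_act_transporter {q q' : {q : Y × G // p q.1 = 𝒢.r q.2}}
    (h : 𝒢.s q.1.2 = 𝒢.s q'.1.2) :
    (hPB.proj hp).graph.left.act (transporter q q' h) q = q' := by
  refine Subtype.ext ((hPB.graph_left_act (hPB.proj hp) rfl).trans (Prod.ext rfl ?_))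
  exact 𝒢.mul_inv_mul_cancel h.symm

lemma transporter_proj_graph_act {t : PullbackCarrier 𝒢 p} {q : {q : Y × G // p q.1 = 𝒢.r q.2}}
    (ht : PB.s t = q.1.1) (h : 𝒢.s q.1.2 = 𝒢.s ((hPB.proj hp).graph.left.act t q).1.2) :
    transporter q ((hPB.proj hp).graph.left.act t q) h = t := by
  have hs : t.1.2.2 = q.1.1 := (hPB.s_eq t).symm.trans ht
  refine Subtype.ext ?_
  show ((((hPB.proj hp).graph.left.act t q).1.1,
    𝒢.mul ((hPB.proj hp).graph.left.act t q).1.2 (𝒢.inv q.1.2), q.1.1) : Y × G × Y) = t.1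
  rw [hPB.graph_left_act (hPB.proj hp) hs]
  exact Prod.ext rfl
    (Prod.ext (𝒢.mul_inv_cancel_right (t.2.2.trans ((congrArg p hs).trans q.2))) hs.symm)

lemma proj_graph_left_free : (hPB.proj hp).graph.left.Free := by
  intro t q ht hfix
  have hs : t.1.2.2 = q.1.1 := (hPB.s_eq t).symm.trans ht
  have hval := (hPB.graph_left_act (hPB.proj hp) hs).symm.trans (congrArg Subtype.val hfix)
  have hγ : t.1.2.1 = 𝒢.unit (p q.1.1) := by
    have hcancel := 𝒢.mul_inv_cancel_right (t.2.2.trans ((congrArg p hs).trans q.2))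
    rw [show 𝒢.mul t.1.2.1 q.1.2 = q.1.2 from congrArg Prod.snd hval, 𝒢.mul_inv, ← q.2]
      at hcancel
    exact hcancel.symm
  refine Subtype.ext ?_
  show t.1 = (PB.unit q.1.1).1
  rw [hPB.unit_eq]
  have hr : t.1.1 = q.1.1 := congrArg Prod.fst hval
  exact Prod.ext hr (Prod.ext hγ hs)

lemma proj_graph_left_proper [T2Space O] : (hPB.proj hp).graph.left.Proper := by
  let C : Set ({q : Y × G // p q.1 = 𝒢.r q.2} × {q : Y × G // p q.1 = 𝒢.r q.2}) :=
    {z | 𝒢.s z.2.1.2 = 𝒢.s z.1.1.2}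
  have hσ (x : {x : PullbackCarrier 𝒢 p × {q : Y × G // p q.1 = 𝒢.r q.2} // PB.s x.1 = x.2.1.1}) :
      𝒢.s x.1.2.1.2 = 𝒢.s ((hPB.proj hp).graph.left.act x.1.1 x.1.2).1.2 :=
    ((hPB.proj hp).graph.σ_actl x.1.1 x.1.2 x.2).symm
  refine isProperMap_of_inverse_on_isClosed (C := C)
    (((hPB.proj hp).graph.left.continuousOn_act.comp_continuous continuous_subtype_val
      fun x => x.2).prodMk (by fun_prop))
    (isClosed_eq (𝒢.continuous_s.comp (by fun_prop)) (𝒢.continuous_s.comp (by fun_prop)))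
    hσ
    (fun z => ⟨(transporter z.1.2 z.1.1 z.2, z.1.2), hPB.s_eq _⟩) ?_
    (fun x => Subtype.ext (Prod.ext (transporter_proj_graph_act hPB hp x.2 (hσ x)) rfl))
    (fun z => Prod.ext (proj_graph_act_transporter hPB hp z.2) rfl)
  refine Continuous.subtype_mk (.prodMk (Continuous.subtype_mk ?_ _) (by fun_prop)) _
  have hmul : Continuous fun z : C => 𝒢.mul z.1.1.1.2 (𝒢.inv z.1.2.1.2) :=
    𝒢.continuousOn_mul.comp_continuous
      ((by fun_prop : Continuous fun z : C => z.1.1.1.2).prodMk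
        (𝒢.continuous_inv.comp (by fun_prop))) fun z => by
      show 𝒢.s z.1.1.1.2 = 𝒢.r (𝒢.inv z.1.2.1.2)
      rw [𝒢.r_inv]; exact z.2.symm
  exact (by fun_prop : Continuous fun z : C => z.1.1.1.1).prodMk (hmul.prodMk (by fun_prop))

lemma proj_graph_σ_eq_iff (q q' : {q : Y × G // p q.1 = 𝒢.r q.2}) :
    (hPB.proj hp).graph.right.σ q = (hPB.proj hp).graph.right.σ q' ↔
      ∃ t, PB.s t = (hPB.proj hp).graph.left.ρ q ∧ (hPB.proj hp).graph.left.act t q = q' :=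
  ⟨fun h => ⟨transporter q q' h, hPB.s_eq _, proj_graph_act_transporter hPB hp h⟩,
    fun ⟨t, ht, hact⟩ => hact ▸ ((hPB.proj hp).graph.σ_actl t q ht).symm⟩

lemma isEquivalence_proj_graph [T2Space O] [T2Space Y] (h𝒢 : 𝒢.OpenMaps)
    (hp_open : IsOpenMap p) (hp_surj : Function.Surjective p) :
    IsEquivalence (hPB.proj hp).graph :=
  have hgraph := (hPB.proj hp).isGraph_graph h𝒢.1
  { free_left := proj_graph_left_free hPB hp
    proper_left := proj_graph_left_proper hPB hp
    free_right := hgraph.free_right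
    proper_right := hgraph.proper_right
    ρ_open := hgraph.ρ_open
    ρ_surj := hgraph.ρ_surj
    ρ_fibres := hgraph.ρ_eq_iff
    σ_open := h𝒢.2.comp (isOpenMap_fibreProduct_snd hp_open 𝒢.continuous_r)
    σ_surj := fun x =>
      have ⟨y, hy⟩ := hp_surj x
      ⟨⟨(y, 𝒢.unit x), hy.trans (𝒢.r_unit x).symm⟩, 𝒢.s_unit x⟩
    σ_fibres := proj_graph_σ_eq_iff hPB hp }

end IsPullbackGroupoid

namespace GBimodule

variable {G O H P X Z : Type*} [TopologicalSpace G] [TopologicalSpace O] [TopologicalSpace H]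
  [TopologicalSpace P] [TopologicalSpace X] [TopologicalSpace Z]
  {𝒢 : TopGroupoid G O} {ℋ : TopGroupoid H P} (N : GBimodule 𝒢 ℋ X) (e : Z ≃ₜ X)

def transport : GBimodule 𝒢 ℋ Z where
  left :=
  { ρ := N.left.ρ ∘ e
    act γ z := e.symm (N.left.act γ (e z))
    continuous_ρ := N.left.continuous_ρ.comp e.continuous
    ρ_act γ z h := by
      simp only [Function.comp_apply, e.apply_symm_apply]
      exact N.left.ρ_act γ (e z) h
    unit_act z := by simp only [Function.comp_apply, N.left.unit_act, e.symm_apply_apply]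
    mul_act γ γ' z h₁ h₂ := by simp only [e.apply_symm_apply, N.left.mul_act γ γ' (e z) h₁ h₂]
    continuousOn_act := e.symm.continuous.comp_continuousOn <| N.left.continuousOn_act.comp
      (Continuous.continuousOn (by fun_prop : Continuous fun p : G × Z => (p.1, e p.2)))
      fun _ h => h }
  right :=
  { σ := N.right.σ ∘ e
    act z η := e.symm (N.right.act (e z) η)
    continuous_σ := N.right.continuous_σ.comp e.continuous
    σ_act z η h := by
      simp only [Function.comp_apply, e.apply_symm_apply]
      exact N.right.σ_act (e z) η h
    act_unit z := by simp only [Function.comp_apply, N.right.act_unit, e.symm_apply_apply]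
    act_mul z η η' h₁ h₂ := by simp only [e.apply_symm_apply, N.right.act_mul (e z) η η' h₁ h₂]
    continuousOn_act := e.symm.continuous.comp_continuousOn <| N.right.continuousOn_act.comp
      (Continuous.continuousOn (by fun_prop : Continuous fun p : Z × H => (e p.1, p.2)))
      fun _ h => h }
  σ_actl γ z h := by
    simp only [Function.comp_apply, e.apply_symm_apply]
    exact N.σ_actl γ (e z) h
  ρ_actr z η h := by
    simp only [Function.comp_apply, e.apply_symm_apply]
    exact N.ρ_actr (e z) η h
  commute γ z η h₁ h₂ := by
    simp only [e.apply_symm_apply]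
    rw [N.commute γ (e z) η h₁ h₂]

variable {N e}

lemma transport_left_act_eq {γ : G} {z z' : Z} (h : N.left.act γ (e z) = e z') :
    (N.transport e).left.act γ z = z' := by
  show e.symm _ = z'
  rw [h, e.symm_apply_apply]

lemma transport_right_act_eq {η : H} {z z' : Z} (h : N.right.act (e z) η = e z') :
    (N.transport e).right.act z η = z' := by
  show e.symm _ = z'
  rw [h, e.symm_apply_apply]

variable {Ω : Type*} [TopologicalSpace Ω] (M : GBimodule 𝒢 ℋ Ω)

/-- `Graph(ρ) ×_{𝒢⁽⁰⁾} Ω`, whose points are `((ω'', γ), ω)`; `Quot M.CompRel` is its quotient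
`Graph(ρ) ×_𝒢 Ω` by the diagonal action `((ω'', γ), ω)·g = ((ω'', γ g), g⁻¹ ω)`. -/
abbrev CompSpace :=
  {v : {q : Ω × G // M.left.ρ q.1 = 𝒢.r q.2} × Ω // 𝒢.s v.1.1.2 = M.left.ρ v.2}

def CompRel (v v' : M.CompSpace) : Prop :=
  ∃ γ : G, 𝒢.s v.1.1.1.2 = 𝒢.r γ ∧ v'.1.1.1.1 = v.1.1.1.1 ∧ v'.1.1.1.2 = 𝒢.mul v.1.1.1.2 γ ∧
    v.1.2 = M.left.act γ v'.1.2

end GBimodule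

namespace IsGraph

variable {G O H P Ω : Type*} [TopologicalSpace G] [TopologicalSpace O] [TopologicalSpace H]
  [TopologicalSpace P] [TopologicalSpace Ω] {𝒢 : TopGroupoid G O} {ℋ : TopGroupoid H P}
  {M : GBimodule 𝒢 ℋ Ω} (hM : IsGraph M)

noncomputable def compPairToGraph (v : M.CompSpace) : {q : Ω × H // M.right.σ q.1 = ℋ.r q.2} :=
  ⟨(v.1.1.1.1, hM.pairing v.1.1.1.1 (M.left.act v.1.1.1.2 v.1.2)),
    hM.σ_eq_r_pairing (M.left.eq_ρ_act v.1.1.2 v.2)⟩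

lemma s_compPairToGraph (v : M.CompSpace) :
    ℋ.s (hM.compPairToGraph v).1.2 = M.right.σ v.1.2 :=
  (hM.s_pairing (M.left.eq_ρ_act v.1.1.2 v.2)).trans (M.σ_actl _ _ v.2)

lemma compPairToGraph_eq_of_rel {v v' : M.CompSpace} (h : M.CompRel v v') :
    hM.compPairToGraph v = hM.compPairToGraph v' := by
  obtain ⟨γ, hγ, h₁, h₂, h₃⟩ := h
  have hγ' : 𝒢.s γ = M.left.ρ v'.1.2 := by
    have hv' := v'.2
    rwa [h₂, 𝒢.s_mul _ _ hγ] at hv'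
  refine Subtype.ext (Prod.ext h₁.symm ?_)
  show hM.pairing v.1.1.1.1 (M.left.act v.1.1.1.2 v.1.2) =
    hM.pairing v'.1.1.1.1 (M.left.act v'.1.1.1.2 v'.1.2)
  rw [h₁, h₂, M.left.mul_act _ _ _ hγ hγ', ← h₃]

lemma continuous_compPairToGraph : Continuous hM.compPairToGraph := by
  have hact : Continuous fun v : M.CompSpace => M.left.act v.1.1.1.2 v.1.2 :=
    M.left.continuousOn_act.comp_continuous
      (by fun_prop : Continuous fun v : M.CompSpace => (v.1.1.1.2, v.1.2)) fun v => v.2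
  refine Continuous.subtype_mk (.prodMk (by fun_prop) ?_) _
  exact hM.continuous_pairing.comp (Continuous.subtype_mk ((by fun_prop : Continuous
    fun v : M.CompSpace => v.1.1.1.1).prodMk hact) fun v => M.left.eq_ρ_act v.1.1.2 v.2)

noncomputable def compHomeomorph :
    Quot M.CompRel ≃ₜ {q : Ω × H // M.right.σ q.1 = ℋ.r q.2} where
  toFun := Quot.lift hM.compPairToGraph fun _ _ => hM.compPairToGraph_eq_of_rel
  invFun q := Quot.mk _ ⟨(⟨(q.1.1, 𝒢.unit (M.left.ρ q.1.1)), (𝒢.r_unit _).symm⟩,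
    M.right.act q.1.1 q.1.2), (𝒢.s_unit _).trans (M.ρ_actr _ _ q.2).symm⟩
  left_inv := Quot.ind fun v => Quot.sound
    ⟨v.1.1.1.2, (𝒢.s_unit _).trans v.1.1.2, rfl,
      by show v.1.1.1.2 = 𝒢.mul (𝒢.unit (M.left.ρ v.1.1.1.1)) v.1.1.1.2
         rw [v.1.1.2, 𝒢.unit_mul],
      hM.act_pairing (M.left.eq_ρ_act v.1.1.2 v.2)⟩
  right_inv q := by
    refine Subtype.ext (Prod.ext rfl (hM.pairing_eq q.2 ?_))
    have hunit := M.left.unit_act (M.right.act q.1.1 q.1.2)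
    rw [M.ρ_actr _ _ q.2] at hunit
    exact hunit.symm
  continuous_toFun := continuous_quot_lift _ hM.continuous_compPairToGraph
  continuous_invFun := continuous_quot_mk.comp <| Continuous.subtype_mk (.prodMk
    (Continuous.subtype_mk ((by fun_prop : Continuous fun q : {q : Ω × H //
      M.right.σ q.1 = ℋ.r q.2} => q.1.1).prodMk (𝒢.continuous_unit.comp
        (M.left.continuous_ρ.comp (by fun_prop)))) _)
    (M.right.continuousOn_act.comp_continuous (by fun_prop) fun q => q.2)) _

variable (PB : TopGroupoid (PullbackCarrier 𝒢 M.left.ρ) Ω)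
  (hPB : IsPullbackGroupoid 𝒢 M.left.ρ PB)

lemma pullbackMorphism_graph_left_act_compPairToGraph {t : PullbackCarrier 𝒢 M.left.ρ}
    {v w : M.CompSpace} (hc : t.1.2.2 = v.1.1.1.1) (hw₁ : w.1.1.1.1 = t.1.1)
    (hw₂ : w.1.1.1.2 = 𝒢.mul t.1.2.1 v.1.1.1.2) (hw₃ : w.1.2 = v.1.2) :
    (hM.pullbackMorphism PB hPB).graph.left.act t (hM.compPairToGraph v) =
      hM.compPairToGraph w := by
  refine Subtype.ext ((hPB.graph_left_act _ hc).trans (Prod.ext hw₁.symm ?_))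
  have hγ : 𝒢.s t.1.2.1 = M.left.ρ v.1.1.1.1 := t.2.2.trans (congrArg M.left.ρ hc)
  show ℋ.mul (hM.pairing t.1.1 (M.left.act t.1.2.1 t.1.2.2))
      (hM.pairing v.1.1.1.1 (M.left.act v.1.1.1.2 v.1.2)) =
    hM.pairing w.1.1.1.1 (M.left.act w.1.1.1.2 w.1.2)
  rw [hw₁, hw₂, hw₃, M.left.mul_act _ _ _ (hγ.trans v.1.1.2) v.2, hc]
  exact hM.pairing_act_mul_pairing t.2.1 (hc ▸ t.2.2) (M.left.eq_ρ_act v.1.1.2 v.2)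

lemma pullbackMorphism_graph_right_act_compPairToGraph {v w : M.CompSpace} {η : H}
    (hη : M.right.σ v.1.2 = ℋ.r η) (hw₁ : w.1.1 = v.1.1) (hw₂ : w.1.2 = M.right.act v.1.2 η) :
    (hM.pullbackMorphism PB hPB).graph.right.act (hM.compPairToGraph v) η =
      hM.compPairToGraph w := by
  have hω : v.1.1.1.1 = w.1.1.1.1 := by rw [hw₁]
  refine Subtype.ext (((hM.pullbackMorphism PB hPB).graph_right_act
    ((hM.s_compPairToGraph v).trans hη)).trans (Prod.ext hω ?_))
  show ℋ.mul (hM.pairing v.1.1.1.1 (M.left.act v.1.1.1.2 v.1.2)) η =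
    hM.pairing w.1.1.1.1 (M.left.act w.1.1.1.2 w.1.2)
  rw [hw₁, hw₂, M.commute _ _ _ v.2 hη, hM.pairing_right_act (M.left.eq_ρ_act v.1.1.2 v.2)
    ((M.σ_actl _ _ v.2).trans hη)]

end IsGraph

/-! ## Statement 3: every generalised morphism is the composition of (the inverse of) an
equivalence and a strict morphism: `[Ω] ∘ Morph(ρ) = Morph(f_Ω)` -/

section Statement3

/-- An isomorphism of `𝒢`-`ℋ`-bimodules: an equivariant homeomorphism intertwining the
anchor maps.  Equality of the corresponding generalised morphisms means exactly that such an
isomorphism exists. -/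
structure GBimoduleIso {G : Type u} {O : Type v} {H : Type w} {P : Type x}
    [TopologicalSpace G] [TopologicalSpace O] [TopologicalSpace H] [TopologicalSpace P]
    {𝒢 : TopGroupoid G O} {ℋ : TopGroupoid H P}
    {Ω₁ : Type y} [TopologicalSpace Ω₁] {Ω₂ : Type z} [TopologicalSpace Ω₂]
    (M₁ : GBimodule 𝒢 ℋ Ω₁) (M₂ : GBimodule 𝒢 ℋ Ω₂) where
  e : Ω₁ ≃ₜ Ω₂
  map_ρ : ∀ ω, M₂.left.ρ (e ω) = M₁.left.ρ ω
  map_σ : ∀ ω, M₂.right.σ (e ω) = M₁.right.σ ω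
  map_actl : ∀ γ ω, 𝒢.s γ = M₁.left.ρ ω → e (M₁.left.act γ ω) = M₂.left.act γ (e ω)
  map_actr : ∀ ω η, M₁.right.σ ω = ℋ.r η → e (M₁.right.act ω η) = M₂.right.act (e ω) η

namespace GBimodule

variable {G O H P X Z : Type*} [TopologicalSpace G] [TopologicalSpace O] [TopologicalSpace H]
  [TopologicalSpace P] [TopologicalSpace X] [TopologicalSpace Z]
  {𝒢 : TopGroupoid G O} {ℋ : TopGroupoid H P}

def transportIso (N : GBimodule 𝒢 ℋ X) (e : Z ≃ₜ X) : GBimoduleIso (N.transport e) N where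
  e := e
  map_ρ _ := rfl
  map_σ _ := rfl
  map_actl _ _ _ := e.apply_symm_apply _
  map_actr _ _ _ := e.apply_symm_apply _

end GBimodule

variable {G : Type u} {O : Type v} {H : Type w} {P : Type x} {Ω : Type v}
variable [TopologicalSpace G] [TopologicalSpace O] [TopologicalSpace H] [TopologicalSpace P]
variable [TopologicalSpace Ω]

theorem generalised_morphism_factorisation_general
    [T2Space O] [T2Space Ω]
    (𝒢 : TopGroupoid G O) (ℋ : TopGroupoid H P)
    (h𝒢 : 𝒢.OpenMaps)
    (M : GBimodule 𝒢 ℋ Ω) (hM : IsGraph M)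
    (PB : TopGroupoid (PullbackCarrier 𝒢 M.left.ρ) Ω)
    (hPB : IsPullbackGroupoid 𝒢 M.left.ρ PB) :
    ∃ f : StrictMorphism PB ℋ,
      -- `f_Ω` extends `σ : Ω = (ρ*(𝒢))⁽⁰⁾ → ℋ⁽⁰⁾`
      f.obj = M.right.σ ∧
      -- `f_Ω (ω',γ,ω) = ⟨ω', γω⟩_ℋ`, the unique `η` with `ω'·η = γ·ω`
      (∀ (t : PullbackCarrier 𝒢 M.left.ρ) (η : H),
        M.right.σ t.1.1 = ℋ.r η →
        M.right.act t.1.1 η = M.left.act t.1.2.1 t.1.2.2 →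
        f.toFun t = η) ∧
      -- `Graph(ρ)` from `ρ*(𝒢)` to `𝒢`:
      (∃ MΘ : GBimodule PB 𝒢 {q : Ω × G // M.left.ρ q.1 = 𝒢.r q.2},
        (∀ q, MΘ.left.ρ q = q.1.1) ∧
        (∀ q, MΘ.right.σ q = 𝒢.s q.1.2) ∧
        (∀ t q, t.1.2.2 = q.1.1 →
          (MΘ.left.act t q).1 = (t.1.1, 𝒢.mul t.1.2.1 q.1.2)) ∧
        (∀ q γ, 𝒢.s q.1.2 = 𝒢.r γ → (MΘ.right.act q γ).1 = (q.1.1, 𝒢.mul q.1.2 γ)) ∧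
        -- `Graph(ρ)` is an equivalence
        IsEquivalence MΘ ∧
        -- the composition `Graph(ρ) ×_𝒢 Ω`, i.e. the quotient of
        -- `Graph(ρ) ×_{𝒢⁽⁰⁾} Ω` by the diagonal `𝒢`-action:
        (∃ MQ : GBimodule PB ℋ (Quot (fun
              (q q' : {v : {q : Ω × G // M.left.ρ q.1 = 𝒢.r q.2} × Ω //
                        𝒢.s v.1.1.2 = M.left.ρ v.2}) =>
              ∃ γ : G, 𝒢.s q.1.1.1.2 = 𝒢.r γ ∧
                q'.1.1.1.1 = q.1.1.1.1 ∧ q'.1.1.1.2 = 𝒢.mul q.1.1.1.2 γ ∧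
                q.1.2 = M.left.act γ q'.1.2)),
          -- the bimodule structure on the quotient is induced by the quotient map
          (∀ v, MQ.left.ρ (Quot.mk _ v) = v.1.1.1.1) ∧
          (∀ v, MQ.right.σ (Quot.mk _ v) = M.right.σ v.1.2) ∧
          (∀ t v (hc : t.1.2.2 = v.1.1.1.1),
            MQ.left.act t (Quot.mk _ v)
              = Quot.mk _ ⟨(⟨(t.1.1, 𝒢.mul t.1.2.1 v.1.1.1.2),
                  t.2.1.trans (𝒢.r_mul t.1.2.1 v.1.1.1.2
                    (t.2.2.trans ((congrArg M.left.ρ hc).trans v.1.1.2))).symm⟩, v.1.2),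
                  (𝒢.s_mul t.1.2.1 v.1.1.1.2
                    (t.2.2.trans ((congrArg M.left.ρ hc).trans v.1.1.2))).trans v.2⟩) ∧
          (∀ v η (hη : M.right.σ v.1.2 = ℋ.r η),
            MQ.right.act (Quot.mk _ v) η
              = Quot.mk _ ⟨(v.1.1, M.right.act v.1.2 η),
                  v.2.trans (M.ρ_actr v.1.2 η hη).symm⟩) ∧
          -- `Graph(f_Ω)` with its canonical bimodule structure:
          (∃ MF : GBimodule PB ℋ {q : Ω × H // M.right.σ q.1 = ℋ.r q.2},
            (∀ q, MF.left.ρ q = q.1.1) ∧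
            (∀ q, MF.right.σ q = ℋ.s q.1.2) ∧
            (∀ t q, t.1.2.2 = q.1.1 →
              (MF.left.act t q).1 = (t.1.1, ℋ.mul (f.toFun t) q.1.2)) ∧
            (∀ q η, ℋ.s q.1.2 = ℋ.r η → (MF.right.act q η).1 = (q.1.1, ℋ.mul q.1.2 η)) ∧
            -- ... and the composition is isomorphic to `Graph(f_Ω)`.
            Nonempty (GBimoduleIso MQ MF)))) := by
  let π := hPB.proj M.left.continuous_ρ
  let f := hM.pullbackMorphism PB hPB
  refine ⟨f, rfl, fun t η h₁ h₂ => hM.pairing_eq h₁ h₂,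
    π.graph, fun _ => rfl, fun _ => rfl, fun t q h => hPB.graph_left_act π h,
    fun q γ h => π.graph_right_act h,
    hPB.isEquivalence_proj_graph M.left.continuous_ρ h𝒢 hM.ρ_open hM.ρ_surj,
    f.graph.transport hM.compHomeomorph, fun _ => rfl, hM.s_compPairToGraph,
    fun t v hc => GBimodule.transport_left_act_eq
      (hM.pullbackMorphism_graph_left_act_compPairToGraph PB hPB hc rfl rfl rfl),
    fun v η hη => GBimodule.transport_right_act_eq
      (hM.pullbackMorphism_graph_right_act_compPairToGraph PB hPB hη rfl rfl),
    f.graph, fun _ => rfl, fun _ => rfl, fun t q h => hPB.graph_left_act f h,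
    fun q η h => f.graph_right_act h, ⟨f.graph.transportIso hM.compHomeomorph⟩⟩

/-- **Factorisation of generalised morphisms.**  Let `Ω` be a graph from `𝒢` to `ℋ` with
anchor maps `ρ` and `σ`.  Then `f_Ω : ρ*(𝒢) → ℋ`, `(ω',γ,ω) ↦ ⟨ω', γω⟩_ℋ`, is a strict
morphism of topological groupoids extending `σ`, the graph `Graph(ρ)` of the canonical strict
morphism `ρ*(𝒢) → 𝒢` is an equivalence, and the composition `Graph(ρ) ×_𝒢 Ω` is isomorphic,
as a `ρ*(𝒢)`-`ℋ`-bimodule, to `Graph(f_Ω)`; that is, `[Ω] ∘ Morph(ρ) = Morph(f_Ω)` as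
generalised morphisms from `ρ*(𝒢)` to `ℋ`. -/
theorem generalised_morphism_factorisation
    [LocallyCompactSpace G] [T2Space G] [LocallyCompactSpace O] [T2Space O]
    [LocallyCompactSpace H] [T2Space H] [LocallyCompactSpace P] [T2Space P]
    [LocallyCompactSpace Ω] [T2Space Ω]
    (𝒢 : TopGroupoid G O) (ℋ : TopGroupoid H P)
    (h𝒢 : 𝒢.OpenMaps) (hℋ : ℋ.OpenMaps)
    (M : GBimodule 𝒢 ℋ Ω) (hM : IsGraph M)
    (PB : TopGroupoid (PullbackCarrier 𝒢 M.left.ρ) Ω)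
    (hPB : IsPullbackGroupoid 𝒢 M.left.ρ PB) :
    ∃ f : StrictMorphism PB ℋ,
      -- `f_Ω` extends `σ : Ω = (ρ*(𝒢))⁽⁰⁾ → ℋ⁽⁰⁾`
      f.obj = M.right.σ ∧
      -- `f_Ω (ω',γ,ω) = ⟨ω', γω⟩_ℋ`, the unique `η` with `ω'·η = γ·ω`
      (∀ (t : PullbackCarrier 𝒢 M.left.ρ) (η : H),
        M.right.σ t.1.1 = ℋ.r η →
        M.right.act t.1.1 η = M.left.act t.1.2.1 t.1.2.2 →
        f.toFun t = η) ∧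
      -- `Graph(ρ)` from `ρ*(𝒢)` to `𝒢`:
      (∃ MΘ : GBimodule PB 𝒢 {q : Ω × G // M.left.ρ q.1 = 𝒢.r q.2},
        (∀ q, MΘ.left.ρ q = q.1.1) ∧
        (∀ q, MΘ.right.σ q = 𝒢.s q.1.2) ∧
        (∀ t q, t.1.2.2 = q.1.1 →
          (MΘ.left.act t q).1 = (t.1.1, 𝒢.mul t.1.2.1 q.1.2)) ∧
        (∀ q γ, 𝒢.s q.1.2 = 𝒢.r γ → (MΘ.right.act q γ).1 = (q.1.1, 𝒢.mul q.1.2 γ)) ∧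
        -- `Graph(ρ)` is an equivalence
        IsEquivalence MΘ ∧
        -- the composition `Graph(ρ) ×_𝒢 Ω`, i.e. the quotient of
        -- `Graph(ρ) ×_{𝒢⁽⁰⁾} Ω` by the diagonal `𝒢`-action:
        (∃ MQ : GBimodule PB ℋ (Quot (fun
              (q q' : {v : {q : Ω × G // M.left.ρ q.1 = 𝒢.r q.2} × Ω //
                        𝒢.s v.1.1.2 = M.left.ρ v.2}) =>
              ∃ γ : G, 𝒢.s q.1.1.1.2 = 𝒢.r γ ∧
                q'.1.1.1.1 = q.1.1.1.1 ∧ q'.1.1.1.2 = 𝒢.mul q.1.1.1.2 γ ∧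
                q.1.2 = M.left.act γ q'.1.2)),
          -- the bimodule structure on the quotient is induced by the quotient map
          (∀ v, MQ.left.ρ (Quot.mk _ v) = v.1.1.1.1) ∧
          (∀ v, MQ.right.σ (Quot.mk _ v) = M.right.σ v.1.2) ∧
          (∀ t v (hc : t.1.2.2 = v.1.1.1.1),
            MQ.left.act t (Quot.mk _ v)
              = Quot.mk _ ⟨(⟨(t.1.1, 𝒢.mul t.1.2.1 v.1.1.1.2),
                  t.2.1.trans (𝒢.r_mul t.1.2.1 v.1.1.1.2
                    (t.2.2.trans ((congrArg M.left.ρ hc).trans v.1.1.2))).symm⟩, v.1.2),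
                  (𝒢.s_mul t.1.2.1 v.1.1.1.2
                    (t.2.2.trans ((congrArg M.left.ρ hc).trans v.1.1.2))).trans v.2⟩) ∧
          (∀ v η (hη : M.right.σ v.1.2 = ℋ.r η),
            MQ.right.act (Quot.mk _ v) η
              = Quot.mk _ ⟨(v.1.1, M.right.act v.1.2 η),
                  v.2.trans (M.ρ_actr v.1.2 η hη).symm⟩) ∧
          -- `Graph(f_Ω)` with its canonical bimodule structure:
          (∃ MF : GBimodule PB ℋ {q : Ω × H // M.right.σ q.1 = ℋ.r q.2},
            (∀ q, MF.left.ρ q = q.1.1) ∧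
            (∀ q, MF.right.σ q = ℋ.s q.1.2) ∧
            (∀ t q, t.1.2.2 = q.1.1 →
              (MF.left.act t q).1 = (t.1.1, ℋ.mul (f.toFun t) q.1.2)) ∧
            (∀ q η, ℋ.s q.1.2 = ℋ.r η → (MF.right.act q η).1 = (q.1.1, ℋ.mul q.1.2 η)) ∧
            -- ... and the composition is isomorphic to `Graph(f_Ω)`.
            Nonempty (GBimoduleIso MQ MF)))) :=
  generalised_morphism_factorisation_general 𝒢 ℋ h𝒢 M hM PB hPB

end Statement3
end

section
/- Let X be a locally compact Hausdorff space, B a u.s.c. field of Banach algebras over X, E and F Banach B-pairs, and T a continuous field of B-linear operators from E to F. Then T is compact if and only if T is locally compact and the function x ↦ ‖T_x‖ vanishes at infinity. -/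
/-! ## Upper semi-continuous fields of Banach spaces, Banach algebras and Banach pairs -/

universe u v w x y z

/-- An upper semi-continuous field of Banach spaces over `X`: a family of (complex) Banach
spaces `(E x)_{x ∈ X}` together with a space of sections `Γ` satisfying Lafforgue's
conditions (C1)–(C4). -/
structure USCField (X : Type u) [TopologicalSpace X] (E : X → Type v)
    [∀ x, NormedAddCommGroup (E x)] [∀ x, NormedSpace ℂ (E x)]
    [∀ x, CompleteSpace (E x)] : Type (max u v) where
  Γ : Set (∀ x, E x)
  /-- (C1) `Γ` is a linear subspace (zero) -/
  zero_mem : (fun x => (0 : E x)) ∈ Γ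
  /-- (C1) `Γ` is a linear subspace (addition) -/
  add_mem : ∀ {ξ η}, ξ ∈ Γ → η ∈ Γ → (fun x => ξ x + η x) ∈ Γ
  /-- (C1) `Γ` is a linear subspace (scalar multiplication) -/
  smul_mem : ∀ (c : ℂ) {ξ}, ξ ∈ Γ → (fun x => c • ξ x) ∈ Γ
  /-- (C2) evaluation has dense image in every fibre -/
  dense_eval : ∀ (x : X) (e : E x) (ε : ℝ), 0 < ε → ∃ ξ ∈ Γ, ‖ξ x - e‖ < ε
  /-- (C3) norms of sections are upper semi-continuous -/
  usc_norm : ∀ ξ ∈ Γ, UpperSemicontinuous fun x => ‖ξ x‖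
  /-- (C4) a selection that is locally uniformly approximable by sections is a section -/
  locally_approx_mem : ∀ ξ : ∀ x, E x,
      (∀ (x₀ : X) (ε : ℝ), 0 < ε → ∃ γ ∈ Γ, ∃ U ∈ nhds x₀, ∀ x ∈ U, ‖ξ x - γ x‖ ≤ ε) →
      ξ ∈ Γ

namespace USCField

variable {X : Type u} [TopologicalSpace X] {E : X → Type v}
  [∀ x, NormedAddCommGroup (E x)] [∀ x, NormedSpace ℂ (E x)] [∀ x, CompleteSpace (E x)]

/-- The sections vanishing at infinity, `Γ₀(X, E)`. -/
def Γ₀ (F : USCField X E) : Set (∀ x, E x) :=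
  {ξ | ξ ∈ F.Γ ∧ ∀ ε : ℝ, 0 < ε → ∃ K : Set X, IsCompact K ∧ ∀ x ∉ K, ‖ξ x‖ ≤ ε}

/-- The sections with compact support, `Γ_c(X, E)`. -/
def Γc (F : USCField X E) : Set (∀ x, E x) :=
  {ξ | ξ ∈ F.Γ ∧ ∃ K : Set X, IsCompact K ∧ ∀ x ∉ K, ξ x = 0}

end USCField

/-- The set of sections of the pullback field `p*E` along `p : Y → X`: the selections
`y ↦ ξ y ∈ E (p y)` which are locally uniformly approximable by sections of the form
`γ ∘ p` with `γ ∈ Γ`. -/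
def pbSec {X : Type u} {Y : Type w} [TopologicalSpace Y] (p : Y → X)
    (E : X → Type v) [∀ x, NormedAddCommGroup (E x)] (Γ : Set (∀ x, E x)) :
    Set (∀ y, E (p y)) :=
  {ξ | ∀ (y₀ : Y) (ε : ℝ), 0 < ε → ∃ γ ∈ Γ, ∃ V ∈ nhds y₀, ∀ y ∈ V, ‖ξ y - γ (p y)‖ ≤ ε}

/-- The sections of the pullback field which vanish at infinity. -/
def pbSec₀ {X : Type u} {Y : Type w} [TopologicalSpace Y] (p : Y → X)
    (E : X → Type v) [∀ x, NormedAddCommGroup (E x)] (Γ : Set (∀ x, E x)) :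
    Set (∀ y, E (p y)) :=
  {ξ | ξ ∈ pbSec p E Γ ∧ ∀ ε : ℝ, 0 < ε → ∃ K : Set Y, IsCompact K ∧ ∀ y ∉ K, ‖ξ y‖ ≤ ε}

/-- A bundled u.s.c. field of Banach spaces over `X`. -/
structure BanachSpaceFieldB (X : Type u) [TopologicalSpace X] : Type (max u (v + 1)) where
  E : X → Type v
  [instN : ∀ x, NormedAddCommGroup (E x)]
  [instS : ∀ x, NormedSpace ℂ (E x)]
  [instC : ∀ x, CompleteSpace (E x)]
  F : USCField X E

attribute [instance] BanachSpaceFieldB.instN BanachSpaceFieldB.instS BanachSpaceFieldB.instC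

/-- A bundled u.s.c. field of Banach algebras over `X`: a u.s.c. field of Banach spaces whose
fibres are (complex, possibly non-unital) Banach algebras, with multiplication a contractive
continuous field of bilinear maps (in particular sections are closed under the fibrewise
product). -/
structure BanachAlgFieldB (X : Type u) [TopologicalSpace X] : Type (max u (v + 1)) where
  A : X → Type v
  [instR : ∀ x, NonUnitalNormedRing (A x)]
  [instS : ∀ x, NormedSpace ℂ (A x)]
  [instM : ∀ x, SMulCommClass ℂ (A x) (A x)]
  [instM' : ∀ x, IsScalarTower ℂ (A x) (A x)]
  [instC : ∀ x, CompleteSpace (A x)]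
  F : USCField X A
  mul_mem : ∀ {ξ η}, ξ ∈ F.Γ → η ∈ F.Γ → (fun x => ξ x * η x) ∈ F.Γ

attribute [instance] BanachAlgFieldB.instR BanachAlgFieldB.instS BanachAlgFieldB.instM
  BanachAlgFieldB.instM' BanachAlgFieldB.instC

/-- A u.s.c. field of Banach algebras is non-degenerate if in each fibre the span of products
is dense. -/
def BanachAlgFieldB.Nondegenerate {X : Type u} [TopologicalSpace X]
    (𝔅 : BanachAlgFieldB.{u, v} X) : Prop :=
  ∀ x, Dense (Submodule.span ℂ {c : 𝔅.A x | ∃ a b : 𝔅.A x, c = a * b} : Set (𝔅.A x))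

/-- A bundled Banach `B`-pair over `X`: u.s.c. fields `E^<` (a left Banach `B`-module) and
`E^>` (a right Banach `B`-module) together with a contractive `B`-bilinear pairing
`⟨·,·⟩ : E^< ×_X E^> → B`. -/
structure BanachPairB {X : Type u} [TopologicalSpace X] (𝔅 : BanachAlgFieldB.{u, v} X) :
    Type (max u (v + 1)) where
  Em : X → Type v
  Ep : X → Type v
  [instmN : ∀ x, NormedAddCommGroup (Em x)]
  [instmS : ∀ x, NormedSpace ℂ (Em x)]
  [instmC : ∀ x, CompleteSpace (Em x)]
  [instpN : ∀ x, NormedAddCommGroup (Ep x)]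
  [instpS : ∀ x, NormedSpace ℂ (Ep x)]
  [instpC : ∀ x, CompleteSpace (Ep x)]
  Fm : USCField X Em
  Fp : USCField X Ep
  /-- the left action of `B` on `E^<` -/
  lsmul : ∀ x, 𝔅.A x →L[ℂ] Em x →L[ℂ] Em x
  /-- the right action of `B` on `E^>` -/
  rsmul : ∀ x, Ep x →L[ℂ] 𝔅.A x →L[ℂ] Ep x
  /-- the pairing `⟨·,·⟩ : E^< ×_X E^> → B` -/
  pairing : ∀ x, Em x →L[ℂ] Ep x →L[ℂ] 𝔅.A x
  lsmul_mul : ∀ x (a b : 𝔅.A x) e, lsmul x (a * b) e = lsmul x a (lsmul x b e)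
  rsmul_mul : ∀ x e (a b : 𝔅.A x), rsmul x (rsmul x e a) b = rsmul x e (a * b)
  norm_lsmul : ∀ x (a : 𝔅.A x) e, ‖lsmul x a e‖ ≤ ‖a‖ * ‖e‖
  norm_rsmul : ∀ x e (a : 𝔅.A x), ‖rsmul x e a‖ ≤ ‖e‖ * ‖a‖
  norm_pairing : ∀ x e f, ‖pairing x e f‖ ≤ ‖e‖ * ‖f‖
  pairing_lsmul : ∀ x (a : 𝔅.A x) e f, pairing x (lsmul x a e) f = a * pairing x e f
  pairing_rsmul : ∀ x e f (a : 𝔅.A x), pairing x e (rsmul x f a) = pairing x e f * a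
  lsmul_mem : ∀ {β ξ}, β ∈ 𝔅.F.Γ → ξ ∈ Fm.Γ → (fun x => lsmul x (β x) (ξ x)) ∈ Fm.Γ
  rsmul_mem : ∀ {ξ β}, ξ ∈ Fp.Γ → β ∈ 𝔅.F.Γ → (fun x => rsmul x (ξ x) (β x)) ∈ Fp.Γ
  pairing_mem : ∀ {ξ η}, ξ ∈ Fm.Γ → η ∈ Fp.Γ →
    (fun x => pairing x (ξ x) (η x)) ∈ 𝔅.F.Γ

attribute [instance] BanachPairB.instmN BanachPairB.instmS BanachPairB.instmC
  BanachPairB.instpN BanachPairB.instpS BanachPairB.instpC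

namespace BanachPairB

variable {X : Type u} [TopologicalSpace X] {𝔅 : BanachAlgFieldB.{u, v} X}

/-- Non-degeneracy of a Banach pair: in each fibre, `E^> B` spans a dense subspace of `E^>`
and `B E^<` spans a dense subspace of `E^<`. -/
def Nondegenerate (P : BanachPairB 𝔅) : Prop :=
  (∀ x, Dense (Submodule.span ℂ
      {e : P.Ep x | ∃ (f : P.Ep x) (a : 𝔅.A x), e = P.rsmul x f a} : Set (P.Ep x))) ∧
  (∀ x, Dense (Submodule.span ℂ
      {e : P.Em x | ∃ (a : 𝔅.A x) (f : P.Em x), e = P.lsmul x a f} : Set (P.Em x)))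

end BanachPairB

section Operators

variable {X : Type u} [TopologicalSpace X] {𝔅 : BanachAlgFieldB.{u, v} X}

/-- The fibrewise rank-one operator `|η⟩⟨ξ| : E^> → F^>`, `e ↦ η ⟨ξ, e⟩`. -/
noncomputable def rankOneP (P Q : BanachPairB 𝔅) (x : X) (ξ : P.Em x) (η : Q.Ep x) :
    P.Ep x →L[ℂ] Q.Ep x :=
  (Q.rsmul x η).comp (P.pairing x ξ)

/-- The fibrewise rank-one operator `|η⟩⟨ξ| : F^< → E^<`, `f ↦ ⟨f, η⟩ ξ`. -/
noncomputable def rankOneM (P Q : BanachPairB 𝔅) (x : X) (ξ : P.Em x) (η : Q.Ep x) :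
    Q.Em x →L[ℂ] P.Em x :=
  ((P.lsmul x).flip ξ).comp ((Q.pairing x).flip η)

variable (P Q : BanachPairB 𝔅)

/-- A family of fibrewise operators between two Banach pairs ("a field of linear maps"):
`T^> : E^> → F^>` and `T^< : F^< → E^<`. -/
structure OpFamily (P Q : BanachPairB 𝔅) : Type (max u v) where
  Tp : ∀ x, P.Ep x →L[ℂ] Q.Ep x
  Tm : ∀ x, Q.Em x →L[ℂ] P.Em x

namespace OpFamily

/-- A continuous field of `B`-linear operators between Banach pairs: fibrewise `B`-linear,
adjointable for the pairings, mapping sections to sections and locally bounded. -/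
structure IsLin {P Q : BanachPairB 𝔅} (T : OpFamily P Q) : Prop where
  map_rsmul : ∀ x e (a : 𝔅.A x), T.Tp x (P.rsmul x e a) = Q.rsmul x (T.Tp x e) a
  map_lsmul : ∀ x (a : 𝔅.A x) f, T.Tm x (Q.lsmul x a f) = P.lsmul x a (T.Tm x f)
  adjoint : ∀ x f e, P.pairing x (T.Tm x f) e = Q.pairing x f (T.Tp x e)
  maps_sections_p : ∀ ξ ∈ P.Fp.Γ, (fun x => T.Tp x (ξ x)) ∈ Q.Fp.Γ
  maps_sections_m : ∀ ξ ∈ Q.Fm.Γ, (fun x => T.Tm x (ξ x)) ∈ P.Fm.Γ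
  locally_bounded : ∀ x₀ : X, ∃ U ∈ nhds x₀, ∃ C : ℝ,
    ∀ x ∈ U, ‖T.Tp x‖ ≤ C ∧ ‖T.Tm x‖ ≤ C

/-- Boundedness of a field of operators. -/
def IsBounded {P Q : BanachPairB 𝔅} (T : OpFamily P Q) : Prop :=
  ∃ C : ℝ, ∀ x, ‖T.Tp x‖ ≤ C ∧ ‖T.Tm x‖ ≤ C

end OpFamily

/-- A field of operators is **locally compact** if near every point it can be uniformly
approximated by finite sums of rank-one operators built from arbitrary sections. -/
def IsLocallyCompactOp {P Q : BanachPairB 𝔅} (T : OpFamily P Q) : Prop :=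
  ∀ (x₀ : X) (ε : ℝ), 0 < ε → ∃ U ∈ nhds x₀, ∃ n : ℕ,
    ∃ ξ : Fin n → ∀ x, P.Em x, ∃ η : Fin n → ∀ x, Q.Ep x,
      (∀ i, ξ i ∈ P.Fm.Γ) ∧ (∀ i, η i ∈ Q.Fp.Γ) ∧
      ∀ x ∈ U, ‖T.Tp x - ∑ i, rankOneP P Q x (ξ i x) (η i x)‖ ≤ ε ∧
               ‖T.Tm x - ∑ i, rankOneM P Q x (ξ i x) (η i x)‖ ≤ ε

/-- A field of operators is **compact** if it is a uniform (over `X`) limit of finite sums of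
rank-one operators built from sections vanishing at infinity. -/
def IsCompactOp {P Q : BanachPairB 𝔅} (T : OpFamily P Q) : Prop :=
  ∀ ε : ℝ, 0 < ε → ∃ n : ℕ,
    ∃ ξ : Fin n → ∀ x, P.Em x, ∃ η : Fin n → ∀ x, Q.Ep x,
      (∀ i, ξ i ∈ P.Fm.Γ₀) ∧ (∀ i, η i ∈ Q.Fp.Γ₀) ∧
      ∀ x, ‖T.Tp x - ∑ i, rankOneP P Q x (ξ i x) (η i x)‖ ≤ ε ∧
           ‖T.Tm x - ∑ i, rankOneM P Q x (ξ i x) (η i x)‖ ≤ ε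

end Operators


section Aux

variable {X : Type u} [TopologicalSpace X] {𝔅 : BanachAlgFieldB.{u, v} X}

/-- Multiplication by a continuous scalar function preserves sections. -/
lemma USCField.smul_cont_mem {E : X → Type v}
    [∀ x, NormedAddCommGroup (E x)] [∀ x, NormedSpace ℂ (E x)] [∀ x, CompleteSpace (E x)]
    (F : USCField X E) {f : X → ℂ} (hf : Continuous f) {ξ : ∀ x, E x} (hξ : ξ ∈ F.Γ) :
    (fun x => f x • ξ x) ∈ F.Γ := by
  apply F.locally_approx_mem
  intro x₀ ε hε
  set M : ℝ := ‖ξ x₀‖ + 1 with hMdef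
  have hM : 0 < M := by positivity
  refine ⟨fun x => f x₀ • ξ x, F.smul_mem _ hξ, ?_⟩
  have h1 : ∀ᶠ x in nhds x₀, ‖ξ x‖ < M :=
    F.usc_norm ξ hξ x₀ M (by rw [hMdef]; linarith)
  have h2 : ∀ᶠ x in nhds x₀, dist (f x) (f x₀) < ε / M :=
    Metric.tendsto_nhds.1 (hf.tendsto x₀) (ε / M) (by positivity)
  refine ⟨_, h1.and h2, fun x hx => ?_⟩
  have : ‖f x • ξ x - f x₀ • ξ x‖ = ‖f x - f x₀‖ * ‖ξ x‖ := by
    rw [← sub_smul, norm_smul]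
  rw [this]
  have hd : ‖f x - f x₀‖ ≤ ε / M := by
    rw [← dist_eq_norm]; exact hx.2.le
  calc ‖f x - f x₀‖ * ‖ξ x‖ ≤ (ε / M) * M := by
        apply mul_le_mul hd hx.1.le (norm_nonneg _) (by positivity)
    _ = ε := by field_simp

lemma norm_rankOneP_le (P Q : BanachPairB 𝔅) (x : X) (ξ : P.Em x) (η : Q.Ep x) :
    ‖rankOneP P Q x ξ η‖ ≤ ‖ξ‖ * ‖η‖ := by
  refine ContinuousLinearMap.opNorm_le_bound _ (by positivity) fun e => ?_
  calc ‖rankOneP P Q x ξ η e‖ = ‖Q.rsmul x η (P.pairing x ξ e)‖ := rfl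
    _ ≤ ‖η‖ * ‖P.pairing x ξ e‖ := Q.norm_rsmul x η _
    _ ≤ ‖η‖ * (‖ξ‖ * ‖e‖) :=
        mul_le_mul_of_nonneg_left (P.norm_pairing x ξ e) (norm_nonneg _)
    _ = ‖ξ‖ * ‖η‖ * ‖e‖ := by ring

lemma norm_rankOneM_le (P Q : BanachPairB 𝔅) (x : X) (ξ : P.Em x) (η : Q.Ep x) :
    ‖rankOneM P Q x ξ η‖ ≤ ‖ξ‖ * ‖η‖ := by
  refine ContinuousLinearMap.opNorm_le_bound _ (by positivity) fun f => ?_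
  calc ‖rankOneM P Q x ξ η f‖ = ‖P.lsmul x (Q.pairing x f η) ξ‖ := rfl
    _ ≤ ‖Q.pairing x f η‖ * ‖ξ‖ := P.norm_lsmul x _ ξ
    _ ≤ (‖f‖ * ‖η‖) * ‖ξ‖ :=
        mul_le_mul_of_nonneg_right (Q.norm_pairing x f η) (norm_nonneg _)
    _ = ‖ξ‖ * ‖η‖ * ‖f‖ := by ring

lemma rankOneP_smul (P Q : BanachPairB 𝔅) (x : X) (r : ℂ) (ξ : P.Em x) (η : Q.Ep x) :
    rankOneP P Q x (r • ξ) (r • η) = (r * r) • rankOneP P Q x ξ η := by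
  ext e
  simp [rankOneP, map_smul, smul_smul]

lemma rankOneM_smul (P Q : BanachPairB 𝔅) (x : X) (r : ℂ) (ξ : P.Em x) (η : Q.Ep x) :
    rankOneM P Q x (r • ξ) (r • η) = (r * r) • rankOneM P Q x ξ η := by
  ext f
  simp [rankOneM, map_smul, smul_smul, mul_comm]

/-- The key abstract estimate for a partition-of-unity patching argument. -/
lemma abstract_patch {G : Type y} [NormedAddCommGroup G] [NormedSpace ℂ G]
    {m : Type z} [Fintype m] (Tx : G) (A : m → G) (φ : m → ℝ) {ε : ℝ} (hε : 0 ≤ ε)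
    (hφ0 : ∀ j, 0 ≤ φ j) (hφ1 : ∑ j, φ j ≤ 1)
    (hA : ∀ j, φ j ≠ 0 → ‖Tx - A j‖ ≤ ε) (hT : (∑ j, φ j) = 1 ∨ ‖Tx‖ ≤ ε) :
    ‖Tx - ∑ j, (φ j : ℂ) • A j‖ ≤ ε := by
  set σ : ℝ := ∑ j, φ j with hσdef
  have hσ0 : 0 ≤ σ := Finset.sum_nonneg fun j _ => hφ0 j
  have hsum : (∑ j, (φ j : ℂ)) = ((σ : ℝ) : ℂ) := by
    rw [hσdef]; push_cast; rfl
  have key : Tx - ∑ j, (φ j : ℂ) • A j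
      = ((1 - σ : ℝ) : ℂ) • Tx + ∑ j, (φ j : ℂ) • (Tx - A j) := by
    have h1 : ∑ j, (φ j : ℂ) • (Tx - A j)
        = ((σ : ℝ) : ℂ) • Tx - ∑ j, (φ j : ℂ) • A j := by
      simp only [smul_sub, Finset.sum_sub_distrib, ← Finset.sum_smul, hsum]
    rw [h1]
    push_cast
    rw [sub_smul, one_smul]
    abel
  rw [key]
  have hle : ‖((1 - σ : ℝ) : ℂ) • Tx + ∑ j, (φ j : ℂ) • (Tx - A j)‖
      ≤ (1 - σ) * ‖Tx‖ + ∑ j, φ j * ε := by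
    refine (norm_add_le _ _).trans (add_le_add ?_ ?_)
    · rw [norm_smul, Complex.norm_real, Real.norm_eq_abs, abs_of_nonneg (by linarith)]
    · refine (norm_sum_le _ _).trans (Finset.sum_le_sum fun j _ => ?_)
      rw [norm_smul, Complex.norm_real, Real.norm_eq_abs, abs_of_nonneg (hφ0 j)]
      by_cases h : φ j = 0
      · simp [h]
      · exact mul_le_mul_of_nonneg_left (hA j h) (hφ0 j)
  refine hle.trans ?_
  rw [← Finset.sum_mul, ← hσdef]
  have hTnn : 0 ≤ ‖Tx‖ := norm_nonneg _
  rcases hT with h | h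
  · rw [h]; norm_num
  · nlinarith

end Aux

/-! ## Statement 5: compact = locally compact + norm vanishing at infinity -/

section Statement5

variable {X : Type u} [TopologicalSpace X]

/-- **Compactness criterion.**  Let `X` be a locally compact Hausdorff space, `B` a u.s.c.
field of Banach algebras over `X`, `E` and `F` Banach `B`-pairs and `T` a continuous field of
`B`-linear operators from `E` to `F`.  Then `T` is compact if and only if `T` is locally
compact and the function `x ↦ ‖T_x‖` vanishes at infinity. -/
theorem compact_iff_locally_compact_and_vanishing
    [LocallyCompactSpace X] [T2Space X]
    {𝔅 : BanachAlgFieldB.{u, v} X} {P Q : BanachPairB 𝔅}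
    (T : OpFamily P Q) (hT : T.IsLin) :
    IsCompactOp T ↔
      (IsLocallyCompactOp T ∧
        ∀ ε : ℝ, 0 < ε → ∃ K : Set X, IsCompact K ∧
          ∀ x ∉ K, max ‖T.Tp x‖ ‖T.Tm x‖ ≤ ε) := by
  constructor
  · intro h
    constructor
    · intro x₀ ε hε
      obtain ⟨n, ξ, η, hξ, hη, hb⟩ := h ε hε
      exact ⟨Set.univ, Filter.univ_mem, n, ξ, η, fun i => (hξ i).1, fun i => (hη i).1,
        fun x _ => hb x⟩
    · intro ε hε
      obtain ⟨n, ξ, η, hξ, hη, hb⟩ := h (ε / 2) (by linarith)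
      set δ : ℝ := min 1 (ε / (2 * (n + 1))) with hδdef
      have hδpos : 0 < δ := lt_min one_pos (by positivity)
      have hδ1 : δ ≤ 1 := min_le_left _ _
      have hδ2 : δ ≤ ε / (2 * ((n : ℝ) + 1)) := min_le_right _ _
      choose Kξ hKξc hKξ using fun i => (hξ i).2 δ hδpos
      choose Kη hKηc hKη using fun i => (hη i).2 δ hδpos
      refine ⟨(⋃ i, Kξ i) ∪ (⋃ i, Kη i),
        ((isCompact_iUnion hKξc).union (isCompact_iUnion hKηc)), fun x hx => ?_⟩
      have hxξ : ∀ i, ‖ξ i x‖ ≤ δ := fun i =>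
        hKξ i x (fun h => hx (Set.mem_union_left _ (Set.mem_iUnion.2 ⟨i, h⟩)))
      have hxη : ∀ i, ‖η i x‖ ≤ δ := fun i =>
        hKη i x (fun h => hx (Set.mem_union_right _ (Set.mem_iUnion.2 ⟨i, h⟩)))
      have hnδ : (n : ℝ) * (δ * δ) ≤ ε / 2 := by
        have h2' : δ * (2 * ((n : ℝ) + 1)) ≤ ε := (le_div_iff₀ (by positivity)).1 hδ2
        have hn : (0 : ℝ) ≤ n := Nat.cast_nonneg n
        nlinarith [mul_nonneg (mul_nonneg hn hδpos.le) (sub_nonneg.2 hδ1)]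
      have hSp : ‖∑ i, rankOneP P Q x (ξ i x) (η i x)‖ ≤ (n : ℝ) * (δ * δ) := by
        refine (norm_sum_le _ _).trans ?_
        calc ∑ i : Fin n, ‖rankOneP P Q x (ξ i x) (η i x)‖ ≤ ∑ _i : Fin n, δ * δ :=
              Finset.sum_le_sum fun i _ => (norm_rankOneP_le P Q x _ _).trans
                (mul_le_mul (hxξ i) (hxη i) (norm_nonneg _) hδpos.le)
          _ = (n : ℝ) * (δ * δ) := by simp [mul_comm]
      have hSm : ‖∑ i, rankOneM P Q x (ξ i x) (η i x)‖ ≤ (n : ℝ) * (δ * δ) := by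
        refine (norm_sum_le _ _).trans ?_
        calc ∑ i : Fin n, ‖rankOneM P Q x (ξ i x) (η i x)‖ ≤ ∑ _i : Fin n, δ * δ :=
              Finset.sum_le_sum fun i _ => (norm_rankOneM_le P Q x _ _).trans
                (mul_le_mul (hxξ i) (hxη i) (norm_nonneg _) hδpos.le)
          _ = (n : ℝ) * (δ * δ) := by simp [mul_comm]
      have h1 : ‖T.Tp x‖ ≤ ε := by
        calc ‖T.Tp x‖ = ‖(T.Tp x - ∑ i, rankOneP P Q x (ξ i x) (η i x))
              + ∑ i, rankOneP P Q x (ξ i x) (η i x)‖ := by rw [sub_add_cancel]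
          _ ≤ ε / 2 + (n : ℝ) * (δ * δ) := (norm_add_le _ _).trans
              (add_le_add (hb x).1 hSp)
          _ ≤ ε := by linarith
      have h2 : ‖T.Tm x‖ ≤ ε := by
        calc ‖T.Tm x‖ = ‖(T.Tm x - ∑ i, rankOneM P Q x (ξ i x) (η i x))
              + ∑ i, rankOneM P Q x (ξ i x) (η i x)‖ := by rw [sub_add_cancel]
          _ ≤ ε / 2 + (n : ℝ) * (δ * δ) := (norm_add_le _ _).trans
              (add_le_add (hb x).2 hSm)
          _ ≤ ε := by linarith
      exact max_le h1 h2
  · rintro ⟨hloc, hvan⟩ ε hε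
    obtain ⟨K, hKc, hK⟩ := hvan ε hε
    choose U hU n ξ η hξΓ hηΓ hbound using fun x₀ : X => hloc x₀ ε hε
    obtain ⟨t, -, htcov⟩ := hKc.elim_nhds_subcover (fun x => interior (U x))
      (fun x _ => interior_mem_nhds.2 (hU x))
    have htcov' : K ⊆ ⋃ j : ↥t, interior (U (j : X)) := by
      refine htcov.trans ?_
      rw [Set.iUnion_subtype]
    obtain ⟨f, hfsub, hfcp⟩ :=
      PartitionOfUnity.exists_isSubordinate_of_locallyFinite_t2space hKc
        (fun j : ↥t => interior (U (j : X))) (fun j => isOpen_interior)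
        (locallyFinite_of_finite _) htcov'
    -- the scalar functions
    set c : ↥t → X → ℂ := fun j x => ((Real.sqrt (f j x) : ℝ) : ℂ) with hcdef
    have hccont : ∀ j, Continuous (c j) := fun j =>
      Complex.continuous_ofReal.comp (Real.continuous_sqrt.comp (f j).continuous)
    have hcsq : ∀ j x, c j x * c j x = ((f j x : ℝ) : ℂ) := by
      intro j x
      rw [hcdef]
      push_cast [← Complex.ofReal_mul]
      rw [Real.mul_self_sqrt (f.nonneg j x)]
    -- the combined index
    set ι := Σ j : ↥t, Fin (n (j : X)) with hιdef
    set N := Fintype.card ι with hNdef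
    set e : Fin N ≃ ι := (Fintype.equivFin ι).symm with hedef
    refine ⟨N, fun k x => c (e k).1 x • ξ ((e k).1 : X) (e k).2 x,
      fun k x => c (e k).1 x • η ((e k).1 : X) (e k).2 x, ?_, ?_, ?_⟩
    · intro k
      refine ⟨P.Fm.smul_cont_mem (hccont _) (hξΓ _ _), fun ε' hε' => ⟨tsupport (f (e k).1),
        hfcp (e k).1, fun x hx => ?_⟩⟩
      have : f (e k).1 x = 0 := image_eq_zero_of_notMem_tsupport hx
      simp [hcdef, this, hε'.le]
    · intro k
      refine ⟨Q.Fp.smul_cont_mem (hccont _) (hηΓ _ _), fun ε' hε' => ⟨tsupport (f (e k).1),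
        hfcp (e k).1, fun x hx => ?_⟩⟩
      have : f (e k).1 x = 0 := image_eq_zero_of_notMem_tsupport hx
      simp [hcdef, this, hε'.le]
    · intro x
      -- rewrite the sums
      have hsumP : ∑ k : Fin N, rankOneP P Q x (c (e k).1 x • ξ ((e k).1 : X) (e k).2 x)
            (c (e k).1 x • η ((e k).1 : X) (e k).2 x)
          = ∑ j : ↥t, ((f j x : ℝ) : ℂ) •
              (∑ i, rankOneP P Q x (ξ (j : X) i x) (η (j : X) i x)) := by
        rw [Equiv.sum_comp e (fun s : ι => rankOneP P Q x (c s.1 x • ξ (s.1 : X) s.2 x)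
          (c s.1 x • η (s.1 : X) s.2 x))]
        rw [← Finset.univ_sigma_univ, Finset.sum_sigma]
        refine Finset.sum_congr rfl fun j _ => ?_
        rw [Finset.smul_sum]
        refine Finset.sum_congr rfl fun i _ => ?_
        rw [rankOneP_smul, hcsq]
      have hsumM : ∑ k : Fin N, rankOneM P Q x (c (e k).1 x • ξ ((e k).1 : X) (e k).2 x)
            (c (e k).1 x • η ((e k).1 : X) (e k).2 x)
          = ∑ j : ↥t, ((f j x : ℝ) : ℂ) •
              (∑ i, rankOneM P Q x (ξ (j : X) i x) (η (j : X) i x)) := by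
        rw [Equiv.sum_comp e (fun s : ι => rankOneM P Q x (c s.1 x • ξ (s.1 : X) s.2 x)
          (c s.1 x • η (s.1 : X) s.2 x))]
        rw [← Finset.univ_sigma_univ, Finset.sum_sigma]
        refine Finset.sum_congr rfl fun j _ => ?_
        rw [Finset.smul_sum]
        refine Finset.sum_congr rfl fun i _ => ?_
        rw [rankOneM_smul, hcsq]
      have hφ1 : ∑ j : ↥t, f j x ≤ 1 := by
        have := f.sum_le_one' x
        rwa [finsum_eq_sum_of_fintype] at this
      have hmemU : ∀ j : ↥t, f j x ≠ 0 → x ∈ U (j : X) := by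
        intro j hj
        exact interior_subset (hfsub j (subset_tsupport _ hj))
      have hcase : (∑ j : ↥t, f j x) = 1 ∨ (‖T.Tp x‖ ≤ ε ∧ ‖T.Tm x‖ ≤ ε) := by
        by_cases hxK : x ∈ K
        · left
          have := f.sum_eq_one' x hxK
          rwa [finsum_eq_sum_of_fintype] at this
        · right
          exact ⟨le_trans (le_max_left _ _) (hK x hxK),
            le_trans (le_max_right _ _) (hK x hxK)⟩
      constructor
      · rw [hsumP]
        refine abstract_patch (T.Tp x) _ (fun j => f j x) hε.le (fun j => f.nonneg j x)
          hφ1 (fun j hj => (hbound (j : X) x (hmemU j hj)).1) ?_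
        rcases hcase with h | h
        · exact Or.inl h
        · exact Or.inr h.1
      · rw [hsumM]
        refine abstract_patch (T.Tm x) _ (fun j => f j x) hε.le (fun j => f.nonneg j x)
          hφ1 (fun j hj => (hbound (j : X) x (hmemU j hj)).2) ?_
        rcases hcase with h | h
        · exact Or.inl h
        · exact Or.inr h.2


end Statement5
end
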